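/- arXiv:1101.2705 — 3 statements merged into one kernel-verified Lean document; each statement's English description precedes it below -/
import Mathlib

section
/- For a connected rooted dag G with at least two nodes and pebbling cost p, and any k ≥ 2, every deterministic thrifty k-way branching program solving the Dag Evaluation Problem DE^G_k has at least k^p states. -/
/-- A deterministic `k`-way branching program with variables `Var` and outputs `Out`.
States are either query states (labeled by `query`, with `k` out-edges given by `next`)
or output states (where `out` is `some o`). -/
structure BP (Var : Type) (k : ℕ) (Out : Type) where
  State : Type
  [finState : Fintype State]
  start : State
  query : State → Var
  next : State → Fin k → State
  out : State → Option Out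

namespace BP

variable {Var Out : Type} {k : ℕ}

/-- The number of states. -/
noncomputable def size (B : BP Var k Out) : ℕ := @Fintype.card B.State B.finState

/-- The computation path of input `I`. -/
def path (B : BP Var k Out) (I : Var → Fin k) : ℕ → B.State
  | 0 => B.start
  | t + 1 => B.next (B.path I t) (I (B.query (B.path I t)))

/-- The computation of `I` is still running at time `t`: no output state was reached earlier. -/
def VisitsAt (B : BP Var k Out) (I : Var → Fin k) (t : ℕ) : Prop :=
  ∀ s < t, B.out (B.path I s) = none

/-- State `q` is on the computation path of input `I`. -/
def Visits (B : BP Var k Out) (I : Var → Fin k) (q : B.State) : Prop :=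
  ∃ t, B.VisitsAt I t ∧ B.path I t = q

/-- `B` computes the function `g`. -/
def Computes (B : BP Var k Out) (g : (Var → Fin k) → Out) : Prop :=
  ∀ I, ∃ t, B.VisitsAt I t ∧ B.out (B.path I t) = some (g I)

end BP
/-- A single black-pebbling move with respect to a child relation: either place a pebble on a
node all of whose children are pebbled, simultaneously removing the pebbles from some set `S`
of its children, or remove a pebble from some node. -/
def PebMove {α : Type} [DecidableEq α] (child : α → α → Prop) (C C' : Finset α) : Prop :=
  (∃ (u : α) (S : Finset α), (∀ v, child v u → v ∈ C) ∧ (∀ v ∈ S, child v u) ∧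
      C' = insert u (C \ S)) ∨
  (∃ u : α, C' = C.erase u)

/-- `f 0, …, f T` is a complete black pebbling sequence: it starts with no pebbles, ends with the
root pebbled, and each step is a valid move (or leaves the configuration unchanged). -/
def IsCompletePebbling {α : Type} [DecidableEq α] (child : α → α → Prop) (root : α)
    (f : ℕ → Finset α) (T : ℕ) : Prop :=
  f 0 = ∅ ∧ root ∈ f T ∧ ∀ t < T, PebMove child (f t) (f (t + 1)) ∨ f (t + 1) = f t

/-- The black pebbling cost: the least `p` such that some complete pebbling sequence never has
more than `p` pebbles on the dag simultaneously. -/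
noncomputable def pebCost (α : Type) [DecidableEq α] (child : α → α → Prop) (root : α) : ℕ :=
  sInf {p | ∃ f T, IsCompletePebbling child root f T ∧ ∀ t ≤ T, (f t).card ≤ p}
/-- A connected rooted dag: nodes `Fin n`, with `child v u` meaning there is an arc from `v`
to `u` (so `v` is a child of `u`).  The relation is well-founded (the dag is acyclic), the
root is the unique node of out-degree `0` (every other node has a parent, which also makes
the dag connected). -/
structure RootedDag where
  n : ℕ
  child : Fin n → Fin n → Prop
  wf : WellFounded child
  root : Fin n
  root_no_parent : ∀ u, ¬ child root u
  root_unique : ∀ u, u ≠ root → ∃ w, child u w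

namespace RootedDag

/-- A leaf is a node of in-degree `0`. -/
def IsLeaf (G : RootedDag) (u : Fin G.n) : Prop := ∀ v, ¬ G.child v u

/-- The input variables of the dag evaluation problem `DE^G_k`: a leaf variable `l_u` for each
leaf `u`, and a variable `f_u(a⃗)` for each internal node `u` and each assignment `a⃗` of values
in `[k]` to the children of `u`. -/
def Var (G : RootedDag) (k : ℕ) : Type :=
  {u : Fin G.n // G.IsLeaf u} ⊕
    (Σ _u : {u : Fin G.n // ¬ G.IsLeaf u}, ({v : Fin G.n // G.child v _u.1} → Fin k))

/-- The value of each node of `G` under input `I`: leaves take their `l` value, and an internal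
node applies its function to the values of its children. -/
noncomputable def val (G : RootedDag) {k : ℕ} (I : G.Var k → Fin k) : Fin G.n → Fin k :=
  WellFounded.fix (C := fun _ => Fin k) G.wf fun u ih =>
    letI := Classical.dec (G.IsLeaf u)
    if h : G.IsLeaf u then I (Sum.inl ⟨u, h⟩)
    else I (Sum.inr ⟨⟨u, h⟩, fun v => ih v.1 v.2⟩)

/-- `B` solves `DE^G_k`: on every input it halts with output `true` iff the value of the
root is `1` (the first element of `[k]`). -/
def SolvesDE (G : RootedDag) {k : ℕ} (hk : 0 < k) (B : BP (G.Var k) k Bool) : Prop :=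
  B.Computes fun I => decide (G.val I G.root = ⟨0, hk⟩)

/-- `B` is thrifty: whenever a state querying `f_u(a⃗)` is visited by input `I`, then `a⃗` is
exactly the tuple of values of the children of `u` under `I`. -/
def Thrifty (G : RootedDag) {k : ℕ} (B : BP (G.Var k) k Bool) : Prop :=
  ∀ (I : G.Var k → Fin k) (q : B.State) (u : {u : Fin G.n // ¬ G.IsLeaf u})
    (a : {v : Fin G.n // G.child v u.1} → Fin k),
    B.Visits I q → B.query q = Sum.inr ⟨u, a⟩ → ∀ v, a v = G.val I v.1

end RootedDag

/-!
On every input, the queries of a thrifty program, traced back from the last query of the root,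
describe a black pebbling of `G`: a child of `w` holds a pebble from its last query before the
relevant query of `w` until that query. So at some time `t` before the last root query, `p` nodes
hold pebbles. Encode the input by the state at time `t` and `N - p` further values (`N` the number
of variables): the answers to those queries after `t` that earlier queries after `t` do not
determine, then all variables that are neither queried after `t` nor the correct variable of a
pebbled node. The latter `p` variables need no room, since thrift makes the later query of a
pebbled node's parent reveal its value. The encoding is injective, so `k ^ N ≤ |B| * k ^ (N - p)`.
-/

open Finset Relation

section

variable {α β γ : Type*}

theorem Finset.card_filter_lt_lt_card [LinearOrder β] {s : Finset α} {f : α → β} {x : α}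
    (hx : x ∈ s) : #{y ∈ s | f y < f x} < #s :=
  card_lt_card (filter_ssubset.2 ⟨x, hx, lt_irrefl _⟩)

theorem Finset.card_filter_lt_lt_card_filter_lt [LinearOrder β] {s : Finset α} {f : α → β}
    {x y : α} (hx : x ∈ s) (hxy : f x < f y) :
    #{z ∈ s | f z < f x} < #{z ∈ s | f z < f y} := by
  refine card_lt_card ((ssubset_iff_of_subset fun z hz => ?_).2 ⟨x, ?_, ?_⟩)
  · simp only [mem_filter] at hz ⊢
    exact ⟨hz.1, hz.2.trans hxy⟩
  · simp [hx, hxy]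
  · simp

theorem Finset.injOn_card_filter_lt [LinearOrder β] {s : Finset α} {f : α → β}
    (hf : Set.InjOn f s) : Set.InjOn (fun x => #{y ∈ s | f y < f x}) s := by
  intro x hx y hy hxy
  rcases lt_trichotomy (f x) (f y) with h | h | h
  · exact absurd hxy (card_filter_lt_lt_card_filter_lt hx h).ne
  · exact hf hx hy h
  · exact absurd hxy (card_filter_lt_lt_card_filter_lt hy h).ne'

theorem Finset.card_filter_lt_congr [LinearOrder β] {s t : Finset α} {f : α → β} {x : α}
    (h : ∀ y, f y < f x → (y ∈ s ↔ y ∈ t)) :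
    #{y ∈ s | f y < f x} = #{y ∈ t | f y < f x} := by
  congr 1
  ext y
  simp only [mem_filter]
  exact ⟨fun hy => ⟨(h y hy.2).1 hy.1, hy.2⟩, fun hy => ⟨(h y hy.2).2 hy.1, hy.2⟩⟩

noncomputable def spread (s : Set γ) (pos : γ → ℕ) (f : γ → β) (d : β) (m : ℕ) :
    Fin m → β :=
  open Classical in fun i => if h : ∃ x ∈ s, pos x = i then f h.choose else d

theorem spread_apply_pos {s : Set γ} {pos : γ → ℕ} {f : γ → β} {d : β} {m : ℕ}
    (hpos : Set.InjOn pos s) {x : γ} (hx : x ∈ s) (hm : pos x < m) :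
    spread s pos f d m ⟨pos x, hm⟩ = f x := by
  have h : ∃ y ∈ s, pos y = pos x := ⟨x, hx, rfl⟩
  rw [spread, dif_pos h, hpos h.choose_spec.1 hx h.choose_spec.2]

end

namespace BP

variable {Var Out : Type} {k : ℕ} {B : BP Var k Out} {I I' : Var → Fin k}

noncomputable def haltTime (B : BP Var k Out) (I : Var → Fin k) : ℕ :=
  sInf {t | B.out (B.path I t) ≠ none}

theorem out_path_of_lt_haltTime {s : ℕ} (hs : s < B.haltTime I) : B.out (B.path I s) = none :=
  not_not.1 (Nat.notMem_of_lt_sInf hs)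

theorem visits_path_of_le_haltTime {t : ℕ} (ht : t ≤ B.haltTime I) : B.Visits I (B.path I t) :=
  ⟨t, fun _ hs => out_path_of_lt_haltTime (by omega), rfl⟩

theorem out_path_haltTime {g : (Var → Fin k) → Out} (hB : B.Computes g) (I : Var → Fin k) :
    B.out (B.path I (B.haltTime I)) = some (g I) := by
  obtain ⟨t, hvis, ht⟩ := hB I
  have hle : B.haltTime I ≤ t := Nat.sInf_le (show B.out (B.path I t) ≠ none by simp [ht])
  have hne : B.out (B.path I (B.haltTime I)) ≠ none :=
    Nat.sInf_mem (s := {t | B.out (B.path I t) ≠ none}) ⟨t, by simp [ht]⟩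
  obtain rfl : B.haltTime I = t := by
    by_contra hlt
    exact hne (hvis _ (lt_of_le_of_ne hle hlt))
  exact ht

theorem path_add_eq {a a' j : ℕ} (h0 : B.path I' a' = B.path I a)
    (h : ∀ i < j, I' (B.query (B.path I (a + i))) = I (B.query (B.path I (a + i)))) :
    ∀ i ≤ j, B.path I' (a' + i) = B.path I (a + i) := by
  intro i hi
  induction i with
  | zero => exact h0
  | succ i ih =>
    change B.next (B.path I' (a' + i)) (I' (B.query (B.path I' (a' + i)))) =
      B.next (B.path I (a + i)) (I (B.query (B.path I (a + i))))
    rw [ih (by omega), h i (by omega)]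

theorem apply_eq_of_path_eq {g : (Var → Fin k) → Out} (hB : B.Computes g)
    (hpath : ∀ s ≤ B.haltTime I, B.path I' s = B.path I s) : g I' = g I := by
  obtain ⟨t, hvis, ht⟩ := hB I'
  have hT := out_path_haltTime hB I
  rcases lt_trichotomy t (B.haltTime I) with hlt | rfl | hlt
  · rw [hpath t hlt.le, out_path_of_lt_haltTime hlt] at ht
    cases ht
  · rw [hpath _ le_rfl, hT] at ht
    exact (Option.some_injective _ ht).symm
  · have := hvis _ hlt
    rw [hpath _ le_rfl, hT] at this
    cases this

theorem path_update_eq [DecidableEq Var] {x : Var} (b : Fin k) {t : ℕ}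
    (h : ∀ s < t, B.query (B.path I s) ≠ x) :
    ∀ s ≤ t, B.path (Function.update I x b) s = B.path I s := by
  intro s hs
  simpa using B.path_add_eq (I := I) (I' := Function.update I x b) (a := 0) (a' := 0) rfl
    (fun i hi => by rw [zero_add]; exact Function.update_of_ne (h i hi) b I) s hs

end BP

namespace RootedDag

section

variable (G : RootedDag)

theorem not_transGen_child_self (v : Fin G.n) : ¬ TransGen G.child v v :=
  G.wf.transGen.induction (C := fun x => ¬ TransGen G.child x x) v fun x ih hx => ih x hx hx

theorem reflTransGen_child_root (u : Fin G.n) : ReflTransGen G.child u G.root := by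
  have : Std.Irrefl (TransGen (flip G.child)) :=
    ⟨fun a ha => G.not_transGen_child_self a (transGen_swap.1 ha)⟩
  have hwf : WellFounded (flip G.child) :=
    Subrelation.wf TransGen.single (Finite.wellFounded_of_trans_of_irrefl _)
  induction u using hwf.induction with
  | _ u ih =>
    by_cases hu : u = G.root
    · exact hu ▸ ReflTransGen.refl
    · obtain ⟨w, hw⟩ := G.root_unique u hu
      exact ReflTransGen.head hw (ih w hw)

theorem exists_child_root (hn : 2 ≤ G.n) : ∃ c, G.child c G.root := by
  obtain ⟨u, hu⟩ : ∃ u : Fin G.n, u ≠ G.root := by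
    have : Nontrivial (Fin G.n) := Fin.nontrivial_iff_two_le.2 hn
    exact exists_ne G.root
  rcases (G.reflTransGen_child_root u).cases_tail with h | ⟨c, -, hc⟩
  · exact absurd h.symm hu
  · exact ⟨c, hc⟩

noncomputable def numDescendants (u : Fin G.n) : ℕ :=
  open Classical in #{v | TransGen G.child v u}

variable {G}

theorem numDescendants_lt {c u : Fin G.n} (h : TransGen G.child c u) :
    G.numDescendants c < G.numDescendants u := by
  classical
  refine card_lt_card ((ssubset_iff_of_subset fun v hv => ?_).2 ⟨c, ?_, ?_⟩)
  · simp only [mem_filter, mem_univ, true_and] at hv ⊢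
    exact hv.trans h
  · simpa using h
  · simpa using G.not_transGen_child_self c

variable {k : ℕ}

noncomputable instance : Fintype (G.Var k) := by
  unfold RootedDag.Var
  exact Fintype.ofFinite _

noncomputable instance : DecidableEq (G.Var k) := Classical.decEq _

def Var.node : G.Var k → Fin G.n
  | .inl u => u.1
  | .inr x => x.1.1

/-- The only variable of `u` a thrifty program may query on input `I`. -/
noncomputable def correctVar (I : G.Var k → Fin k) (u : Fin G.n) : G.Var k :=
  open Classical in
  if h : G.IsLeaf u then .inl ⟨u, h⟩ else .inr ⟨⟨u, h⟩, fun v => G.val I v.1⟩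

variable {I I' : G.Var k → Fin k}

theorem correctVar_of_isLeaf {u : Fin G.n} (h : G.IsLeaf u) :
    G.correctVar I u = .inl ⟨u, h⟩ :=
  dif_pos h

theorem correctVar_of_not_isLeaf {u : Fin G.n} (h : ¬ G.IsLeaf u) :
    G.correctVar I u = .inr ⟨⟨u, h⟩, fun v => G.val I v.1⟩ :=
  dif_neg h

@[simp]
theorem node_correctVar (I : G.Var k → Fin k) (u : Fin G.n) : (G.correctVar I u).node = u := by
  by_cases h : G.IsLeaf u
  · rw [correctVar_of_isLeaf h]; rfl
  · rw [correctVar_of_not_isLeaf h]; rfl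

theorem eq_of_correctVar_eq {u v : Fin G.n} (h : G.correctVar I u = G.correctVar I' v) : u = v := by
  simpa using congrArg Var.node h

theorem val_eq_apply_correctVar (I : G.Var k → Fin k) (u : Fin G.n) :
    G.val I u = I (G.correctVar I u) := by
  rw [val, WellFounded.fix_eq]
  by_cases h : G.IsLeaf u
  · rw [dif_pos h, correctVar_of_isLeaf h]
  · rw [dif_neg h, correctVar_of_not_isLeaf h]
    rfl

theorem correctVar_congr_of_val_eq {u : Fin G.n}
    (h : ∀ c, G.child c u → G.val I c = G.val I' c) :
    G.correctVar I u = G.correctVar I' u := by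
  by_cases hu : G.IsLeaf u
  · rw [correctVar_of_isLeaf hu, correctVar_of_isLeaf hu]
  · rw [correctVar_of_not_isLeaf hu, correctVar_of_not_isLeaf hu]
    congr 2
    funext c
    exact h c.1 c.2

theorem val_congr {u : Fin G.n}
    (h : ∀ x : G.Var k, ReflTransGen G.child x.node u → I x = I' x) :
    G.val I u = G.val I' u := by
  induction u using G.wf.induction with
  | _ u ih =>
    have hvar : G.correctVar I u = G.correctVar I' u := correctVar_congr_of_val_eq fun c hc =>
      ih c hc fun x hx => h x (hx.tail hc)
    rw [val_eq_apply_correctVar, val_eq_apply_correctVar, hvar]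
    exact h _ (by simp [ReflTransGen.refl])

theorem correctVar_congr {u : Fin G.n}
    (h : ∀ x : G.Var k, TransGen G.child x.node u → I x = I' x) :
    G.correctVar I u = G.correctVar I' u :=
  correctVar_congr_of_val_eq fun _ hc => val_congr fun x hx => h x (TransGen.tail' hx hc)

theorem val_eq_of_correctVar_eq {w c : Fin G.n} (h : G.correctVar I w = G.correctVar I' w)
    (hc : G.child c w) : G.val I c = G.val I' c := by
  have hw : ¬ G.IsLeaf w := fun hl => hl c hc
  rw [correctVar_of_not_isLeaf hw, correctVar_of_not_isLeaf hw] at h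
  exact congrFun (eq_of_heq (Sigma.mk.inj_iff.1 (Sum.inr_injective h)).2) ⟨c, hc⟩

theorem val_update_correctVar (I : G.Var k → Fin k) (u : Fin G.n) (b : Fin k) :
    G.val (Function.update I (G.correctVar I u) b) u = b := by
  have hbelow : G.correctVar (Function.update I (G.correctVar I u) b) u = G.correctVar I u := by
    refine correctVar_congr fun x hx => ?_
    have hne : x ≠ G.correctVar I u := by
      rintro rfl
      exact G.not_transGen_child_self u (by simpa using hx)
    exact Function.update_of_ne hne b I
  rw [val_eq_apply_correctVar, hbelow, Function.update_self]

end

/-! ### Pebblings read off query sequences -/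

section

variable (G : RootedDag) (σ : ℕ → Fin G.n) (T : ℕ)

def Avoids (v : Fin G.n) (b c : ℕ) : Prop := ∀ s, b ≤ s → s < c → σ s ≠ v

/-- Read `σ` as the sequence of nodes queried at times `0, …, T - 1`. -/
def ChildrenFirst : Prop := ∀ t < T, ∀ c, G.child c (σ t) → ∃ s < t, σ s = c

inductive UsedQuery : Fin G.n → ℕ → Prop
  | root {r : ℕ} : σ r = G.root → r < T → G.Avoids σ G.root (r + 1) T → UsedQuery G.root r
  | child {w v : Fin G.n} {t s : ℕ} : UsedQuery w t → G.child v w → σ s = v → s < t →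
      G.Avoids σ v (s + 1) t → UsedQuery v s

/-- A child `v` of `w` holds a pebble from its used query to the used query of `w`, and the root
from its used query on. -/
noncomputable def pebbles (t : ℕ) : Finset (Fin G.n) :=
  open Classical in {v | (v = G.root ∧ ∃ r < t, G.UsedQuery σ T G.root r) ∨
    ∃ w t', G.child v w ∧ G.UsedQuery σ T w t' ∧ t ≤ t' ∧ G.Avoids σ v t t'}

variable {G σ T}

theorem exists_last_query {v : Fin G.n} {t : ℕ} (h : ∃ s < t, σ s = v) :
    ∃ s < t, σ s = v ∧ G.Avoids σ v (s + 1) t := by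
  classical
  obtain ⟨s₀, hs₀, hv₀⟩ := h
  have hspec := Nat.findGreatest_spec (P := fun s => s < t ∧ σ s = v) hs₀.le ⟨hs₀, hv₀⟩
  exact ⟨_, hspec.1, hspec.2, fun s hs hst hv =>
    Nat.findGreatest_is_greatest (P := fun s => s < t ∧ σ s = v) hs hst.le ⟨hst, hv⟩⟩

namespace UsedQuery

theorem apply_eq {v : Fin G.n} {t : ℕ} (h : G.UsedQuery σ T v t) : σ t = v := by
  cases h <;> assumption

theorem lt {v : Fin G.n} {t : ℕ} (h : G.UsedQuery σ T v t) : t < T := by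
  induction h with
  | root _ hr _ => exact hr
  | child _ _ _ hst _ ih => exact hst.trans ih

theorem root_unique {r r' : ℕ} (h : G.UsedQuery σ T G.root r) (h' : G.UsedQuery σ T G.root r') :
    r = r' := by
  cases h with
  | child _ hc => exact absurd hc (G.root_no_parent _)
  | root hr hrT havoid =>
    cases h' with
    | child _ hc => exact absurd hc (G.root_no_parent _)
    | root hr' hrT' havoid' =>
      by_contra hne
      rcases Nat.lt_or_gt_of_ne hne with hlt | hlt
      · exact havoid r' hlt hrT' hr'
      · exact havoid' r hlt hrT hr

theorem le_root {v : Fin G.n} {t r : ℕ} (h : G.UsedQuery σ T v t)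
    (hr : G.UsedQuery σ T G.root r) : t ≤ r := by
  induction h with
  | root h₁ h₂ h₃ => exact ((root h₁ h₂ h₃).root_unique hr).le
  | child _ _ _ hst _ ih => exact hst.le.trans ih

end UsedQuery

theorem exists_usedQuery_root (h : ∃ s < T, σ s = G.root) :
    ∃ r, G.UsedQuery σ T G.root r := by
  obtain ⟨r, hrT, hr, havoid⟩ := exists_last_query h
  exact ⟨r, .root hr hrT havoid⟩

theorem mem_pebbles {t : ℕ} {v : Fin G.n} :
    v ∈ G.pebbles σ T t ↔ (v = G.root ∧ ∃ r < t, G.UsedQuery σ T G.root r) ∨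
      ∃ w t', G.child v w ∧ G.UsedQuery σ T w t' ∧ t ≤ t' ∧ G.Avoids σ v t t' := by
  simp [pebbles]

theorem pebbles_zero (hσ : G.ChildrenFirst σ T) : G.pebbles σ T 0 = ∅ := by
  ext v
  simp only [mem_pebbles, notMem_empty, iff_false, not_or, not_exists, not_and]
  refine ⟨fun _ r hr => absurd hr (Nat.not_lt_zero r), fun w t' hvw hw _ havoid => ?_⟩
  obtain ⟨s, hst, hs⟩ := hσ t' hw.lt v (hw.apply_eq ▸ hvw)
  exact havoid s (Nat.zero_le s) hst hs

theorem root_mem_pebbles_iff {r t : ℕ} (hr : G.UsedQuery σ T G.root r) :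
    G.root ∈ G.pebbles σ T t ↔ r < t := by
  rw [mem_pebbles]
  constructor
  · rintro (⟨-, r', hr't, hr'⟩ | ⟨w, -, hw, -⟩)
    · exact hr.root_unique hr' ▸ hr't
    · exact absurd hw (G.root_no_parent w)
  · exact fun hrt => .inl ⟨rfl, r, hrt, hr⟩

theorem mem_pebbles_of_child {w c : Fin G.n} {t : ℕ} (hw : G.UsedQuery σ T w t)
    (hc : G.child c w) : c ∈ G.pebbles σ T t :=
  mem_pebbles.2 (.inr ⟨w, t, hc, hw, le_rfl, fun _ h₁ h₂ => absurd h₂ (not_lt.2 h₁)⟩)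

theorem mem_pebbles_succ {v : Fin G.n} {t : ℕ} (hv : G.UsedQuery σ T v t) :
    v ∈ G.pebbles σ T (t + 1) := by
  rw [mem_pebbles]
  cases hv with
  | root => exact .inl ⟨rfl, t, Nat.lt_succ_self t, .root ‹_› ‹_› ‹_›⟩
  | child hw hvw _ hst havoid => exact .inr ⟨_, _, hvw, hw, hst, havoid⟩

theorem mem_pebbles_or_usedQuery {v : Fin G.n} {t : ℕ} (hv : v ∈ G.pebbles σ T (t + 1)) :
    v ∈ G.pebbles σ T t ∨ G.UsedQuery σ T v t := by
  rw [mem_pebbles] at hv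
  rcases hv with ⟨rfl, r, hrt, hr⟩ | ⟨w, t', hvw, hw, htt', havoid⟩
  · rcases Nat.lt_succ_iff_lt_or_eq.1 hrt with hrt | rfl
    · exact .inl (mem_pebbles.2 (.inl ⟨rfl, r, hrt, hr⟩))
    · exact .inr hr
  · by_cases hσt : σ t = v
    · exact .inr (.child hw hvw hσt (by omega) havoid)
    · refine .inl (mem_pebbles.2 (.inr ⟨w, t', hvw, hw, by omega, fun s hs hst => ?_⟩))
      rcases Nat.lt_or_ge t s with h | h
      · exact havoid s h hst
      · exact (le_antisymm h hs) ▸ hσt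

theorem exists_usedQuery_parent {v : Fin G.n} {t : ℕ} (hv : v ∈ G.pebbles σ T t)
    (hv' : v ∉ G.pebbles σ T (t + 1)) : ∃ w, G.child v w ∧ G.UsedQuery σ T w t := by
  rw [mem_pebbles] at hv
  rcases hv with ⟨rfl, r, hrt, hr⟩ | ⟨w, t', hvw, hw, htt', havoid⟩
  · exact absurd ((root_mem_pebbles_iff hr).2 (by omega)) hv'
  · obtain rfl | hlt := eq_or_lt_of_le htt'
    · exact ⟨w, hvw, hw⟩
    · exact absurd
        (mem_pebbles.2 (.inr ⟨w, t', hvw, hw, hlt, fun s hs => havoid s (by omega)⟩)) hv'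

theorem pebMove_pebbles (t : ℕ) :
    PebMove G.child (G.pebbles σ T t) (G.pebbles σ T (t + 1)) ∨
      G.pebbles σ T (t + 1) = G.pebbles σ T t := by
  by_cases hq : ∃ x, G.UsedQuery σ T x t
  · obtain ⟨x, hx⟩ := hq
    refine .inl (.inl ⟨x, G.pebbles σ T t \ G.pebbles σ T (t + 1),
      fun c hc => mem_pebbles_of_child hx hc, fun v hv => ?_, ?_⟩)
    · rw [mem_sdiff] at hv
      obtain ⟨w, hvw, hw⟩ := exists_usedQuery_parent hv.1 hv.2
      exact (hx.apply_eq.symm.trans hw.apply_eq) ▸ hvw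
    · ext v
      simp only [mem_insert, mem_sdiff, not_and, not_not]
      constructor
      · intro hv
        rcases mem_pebbles_or_usedQuery hv with h | h
        · exact .inr ⟨h, fun _ => hv⟩
        · exact .inl (h.apply_eq.symm.trans hx.apply_eq)
      · rintro (rfl | ⟨h₁, h₂⟩)
        · exact mem_pebbles_succ hx
        · exact h₂ h₁
  · refine .inr (Finset.ext fun v => ⟨fun hv => ?_, fun hv => ?_⟩)
    · exact (mem_pebbles_or_usedQuery hv).resolve_right fun h => hq ⟨v, h⟩
    · by_contra hv'
      obtain ⟨w, -, hw⟩ := exists_usedQuery_parent hv hv'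
      exact hq ⟨w, hw⟩

theorem isCompletePebbling_pebbles (hσ : G.ChildrenFirst σ T) {r : ℕ}
    (hr : G.UsedQuery σ T G.root r) :
    IsCompletePebbling G.child G.root (G.pebbles σ T) (r + 1) :=
  ⟨pebbles_zero hσ, (root_mem_pebbles_iff hr).2 (Nat.lt_succ_self r),
    fun t _ => pebMove_pebbles t⟩

theorem card_pebbles_succ_root_le {r : ℕ} (hr : G.UsedQuery σ T G.root r) :
    #(G.pebbles σ T (r + 1)) ≤ 1 := by
  refine card_le_one.2 fun u hu v hv => ?_
  suffices h : ∀ u ∈ G.pebbles σ T (r + 1), u = G.root from (h u hu).trans (h v hv).symm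
  intro u hu
  rcases mem_pebbles.1 hu with ⟨rfl, -⟩ | ⟨w, t', -, hw, hrt, -⟩
  · rfl
  · exact absurd (hw.le_root hr) (by omega)

theorem exists_le_card_pebbles (hn : 2 ≤ G.n) (hσ : G.ChildrenFirst σ T) {r : ℕ}
    (hr : G.UsedQuery σ T G.root r) :
    ∃ t ≤ r, pebCost (Fin G.n) G.child G.root ≤ #(G.pebbles σ T t) := by
  by_contra! hsmall
  obtain ⟨c, hc⟩ := G.exists_child_root hn
  have hpos : 0 < #(G.pebbles σ T r) := card_pos.2 ⟨c, mem_pebbles_of_child hr hc⟩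
  have hcost := hsmall r le_rfl
  have : pebCost (Fin G.n) G.child G.root ≤ pebCost (Fin G.n) G.child G.root - 1 := by
    refine Nat.sInf_le
      ⟨G.pebbles σ T, r + 1, isCompletePebbling_pebbles hσ hr, fun t ht => ?_⟩
    rcases Nat.lt_succ_iff_lt_or_eq.1 (Nat.lt_succ_of_le ht) with ht | rfl
    · have := hsmall t (by omega)
      omega
    · have := card_pebbles_succ_root_le hr
      omega
  omega

variable {σ' : ℕ → Fin G.n} {T' a a' L : ℕ}

theorem Avoids.shift (hσ : ∀ i < L, σ' (a' + i) = σ (a + i)) {v : Fin G.n} {b c : ℕ}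
    (h : G.Avoids σ v b c) (hb : a ≤ b) (hc : c ≤ a + L) :
    G.Avoids σ' v (a' + (b - a)) (a' + (c - a)) := by
  intro s hs₁ hs₂
  have hs : σ' s = σ (a + (s - a')) := by
    rw [← hσ (s - a') (by omega), Nat.add_sub_cancel' (by omega)]
  rw [hs]
  exact h _ (by omega) (by omega)

theorem UsedQuery.shift (hσ : ∀ i < L, σ' (a' + i) = σ (a + i)) (hT : T = a + L)
    (hT' : T' = a' + L) {v : Fin G.n} {t : ℕ} (h : G.UsedQuery σ T v t) (ht : a ≤ t) :
    G.UsedQuery σ' T' v (a' + (t - a)) := by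
  induction h with
  | @root r hr hrT havoid =>
    refine .root ?_ (by omega) ?_
    · rw [hσ _ (by omega), Nat.add_sub_cancel' ht, hr]
    · convert havoid.shift hσ (by omega) (by omega) using 1 <;> omega
  | @child w v t s hw hvw hs hst havoid ih =>
    refine .child (ih (by omega)) hvw ?_ (by omega) ?_
    · rw [hσ _ (by have := hw.lt; omega), Nat.add_sub_cancel' ht, hs]
    · convert havoid.shift hσ (by omega) (by have := hw.lt; omega) using 1; omega

theorem mem_pebbles_shift (hσ : ∀ i < L, σ' (a' + i) = σ (a + i)) (hT : T = a + L)
    (hT' : T' = a' + L) {v : Fin G.n} (hv : v ∈ G.pebbles σ T a) (hroot : v ≠ G.root) :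
    v ∈ G.pebbles σ' T' a' := by
  rcases mem_pebbles.1 hv with ⟨h, -⟩ | ⟨w, t', hvw, hw, hat', havoid⟩
  · exact absurd h hroot
  · refine mem_pebbles.2 (.inr ⟨w, _, hvw, hw.shift hσ hT hT' hat', by omega, ?_⟩)
    convert havoid.shift hσ le_rfl (by have := hw.lt; omega) using 1
    omega

end

/-! ### Thrifty programs -/

section

variable {G : RootedDag} {k : ℕ}

def queryNode (B : BP (G.Var k) k Bool) (I : G.Var k → Fin k) (s : ℕ) : Fin G.n :=
  (B.query (B.path I s)).node

variable {B : BP (G.Var k) k Bool} {I : G.Var k → Fin k}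

theorem query_eq_correctVar (hB : G.Thrifty B) {s : ℕ} (hs : s ≤ B.haltTime I) :
    B.query (B.path I s) = G.correctVar I (queryNode B I s) := by
  unfold queryNode
  rcases hq : B.query (B.path I s) with ⟨u, hu⟩ | ⟨⟨u, hu⟩, a⟩
  · exact (correctVar_of_isLeaf hu).symm
  · rw [show Var.node (.inr ⟨⟨u, hu⟩, a⟩ : G.Var k) = u from rfl,
      correctVar_of_not_isLeaf hu]
    congr 2
    funext v
    exact hB I _ ⟨u, hu⟩ a (BP.visits_path_of_le_haltTime hs) hq v

theorem path_update_correctVar_eq (hB : G.Thrifty B) {u : Fin G.n} (b : Fin k) {t : ℕ}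
    (ht : t ≤ B.haltTime I) (hu : ∀ s < t, queryNode B I s ≠ u) :
    ∀ s ≤ t, B.path (Function.update I (G.correctVar I u) b) s = B.path I s :=
  BP.path_update_eq b fun s hs h =>
    hu s hs (eq_of_correctVar_eq ((query_eq_correctVar hB (by omega)).symm.trans h))

/-- Otherwise the value of the child could be changed without changing the computation up to
that query, contradicting thrift. -/
theorem childrenFirst_queryNode (hk : 2 ≤ k) (hB : G.Thrifty B) (I : G.Var k → Fin k) :
    G.ChildrenFirst (queryNode B I) (B.haltTime I) := by
  intro t ht c hc
  by_contra! hu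
  have : Nontrivial (Fin k) := Fin.nontrivial_iff_two_le.2 hk
  obtain ⟨b, hb⟩ := exists_ne (G.val I c)
  have hpath := path_update_correctVar_eq hB b ht.le hu
  have hvis : B.Visits (Function.update I (G.correctVar I c) b) (B.path I t) :=
    ⟨t, fun s hs => by rw [hpath s hs.le]; exact BP.out_path_of_lt_haltTime (hs.trans ht),
      hpath t le_rfl⟩
  have hw : ¬ G.IsLeaf (queryNode B I t) := fun h => h c hc
  have hq := (query_eq_correctVar hB ht.le).trans (correctVar_of_not_isLeaf hw)
  have := hB _ _ _ _ hvis hq ⟨c, hc⟩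
  rw [val_update_correctVar] at this
  exact hb this.symm

/-- A program that never queried the correct variable of the root could not tell its value. -/
theorem exists_queryNode_eq_root (hk : 2 ≤ k) {hk₀ : 0 < k} (hsolve : G.SolvesDE hk₀ B)
    (hB : G.Thrifty B) (I : G.Var k → Fin k) :
    ∃ s < B.haltTime I, queryNode B I s = G.root := by
  by_contra! hu
  have : Nontrivial (Fin k) := Fin.nontrivial_iff_two_le.2 hk
  obtain ⟨b, hb⟩ : ∃ b : Fin k, (b = ⟨0, hk₀⟩ ↔ G.val I G.root ≠ ⟨0, hk₀⟩) := by
    by_cases h : G.val I G.root = ⟨0, hk₀⟩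
    · obtain ⟨b, hb⟩ := exists_ne (⟨0, hk₀⟩ : Fin k)
      exact ⟨b, by simp [hb, h]⟩
    · exact ⟨⟨0, hk₀⟩, by simp [h]⟩
  have := BP.apply_eq_of_path_eq hsolve (path_update_correctVar_eq hB b le_rfl hu)
  rw [val_update_correctVar] at this
  simp only [decide_eq_decide] at this
  tauto

end

/-! ### The encoding -/

section

variable {G : RootedDag} {k : ℕ} (B : BP (G.Var k) k Bool) (p : ℕ)

noncomputable def bottleneck (I : G.Var k → Fin k) : ℕ :=
  sInf {t | p ≤ #(G.pebbles (queryNode B I) (B.haltTime I) t)}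

noncomputable def criticalNodes (I : G.Var k → Fin k) : Finset (Fin G.n) :=
  G.pebbles (queryNode B I) (B.haltTime I) (bottleneck B p I)

def PebblingReaches : Prop :=
  ∀ I, p ≤ #(criticalNodes B p I) ∧
    ∃ r, G.UsedQuery (queryNode B I) (B.haltTime I) G.root r ∧ bottleneck B p I ≤ r

noncomputable def futureLen (I : G.Var k → Fin k) : ℕ := B.haltTime I - bottleneck B p I

noncomputable def futureVar (I : G.Var k → Fin k) (j : ℕ) : G.Var k :=
  B.query (B.path I (bottleneck B p I + j))

noncomputable def futureNode (I : G.Var k → Fin k) (j : ℕ) : Fin G.n :=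
  queryNode B I (bottleneck B p I + j)

/-- The value of `v` is known after the first `j` future queries. -/
def Revealed (I : G.Var k → Fin k) (j : ℕ) (v : Fin G.n) : Prop :=
  ∃ i < j, v = futureNode B p I i ∨ G.child v (futureNode B p I i)

/-- The future queries whose answers have to be stored in the stream. -/
noncomputable def consumedSteps (I : G.Var k → Fin k) : Finset ℕ :=
  open Classical in {j ∈ range (futureLen B p I) | ¬ Revealed B p I j (futureNode B p I j)}

noncomputable def criticalVars (I : G.Var k → Fin k) : Finset (G.Var k) :=
  (criticalNodes B p I).image (G.correctVar I)

noncomputable def futureVars (I : G.Var k → Fin k) : Finset (G.Var k) :=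
  (range (futureLen B p I)).image (futureVar B p I)

noncomputable def otherVars (I : G.Var k → Fin k) : Finset (G.Var k) :=
  univ \ (criticalVars B p I ∪ futureVars B p I)

noncomputable def varKey (x : G.Var k) : ℕ :=
  G.numDescendants x.node * Fintype.card (G.Var k) + Fintype.equivFin (G.Var k) x

theorem varKey_lt_varKey {x y : G.Var k}
    (h : G.numDescendants x.node < G.numDescendants y.node) : varKey x < varKey y := by
  have := (Fintype.equivFin (G.Var k) x).isLt
  unfold varKey
  nlinarith

theorem numDescendants_le_of_varKey_le {x y : G.Var k} (h : varKey x ≤ varKey y) :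
    G.numDescendants x.node ≤ G.numDescendants y.node := by
  by_contra! h'
  exact (varKey_lt_varKey h').not_ge h

theorem varKey_injective : Function.Injective (varKey : G.Var k → ℕ) := by
  intro x y h
  have hnd : G.numDescendants x.node = G.numDescendants y.node :=
    le_antisymm (numDescendants_le_of_varKey_le h.le) (numDescendants_le_of_varKey_le h.ge)
  unfold varKey at h
  rw [hnd] at h
  exact (Fintype.equivFin _).injective (Fin.ext (by omega))

def streamEntries (I : G.Var k → Fin k) : Set (ℕ ⊕ G.Var k) :=
  {z | Sum.elim (· ∈ consumedSteps B p I) (· ∈ otherVars B p I) z}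

noncomputable def slot (I : G.Var k → Fin k) : ℕ ⊕ G.Var k → ℕ
  | .inl j => #{i ∈ consumedSteps B p I | id i < id j}
  | .inr x => #(consumedSteps B p I) + #{y ∈ otherVars B p I | varKey y < varKey x}

noncomputable def entryValue (I : G.Var k → Fin k) : ℕ ⊕ G.Var k → Fin k :=
  Sum.elim (fun j => I (futureVar B p I j)) I

noncomputable def stream [NeZero k] (I : G.Var k → Fin k) :
    Fin (Fintype.card (G.Var k) - p) → Fin k :=
  spread (streamEntries B p I) (slot B p I) (entryValue B p I) 0 _

noncomputable def encode [NeZero k] (I : G.Var k → Fin k) :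
    B.State × (Fin (Fintype.card (G.Var k) - p) → Fin k) :=
  (B.path I (bottleneck B p I), stream B p I)

variable {B p} {I I' : G.Var k → Fin k}

theorem pebblingReaches {hk₀ : 0 < k} (hn : 2 ≤ G.n) (hk : 2 ≤ k)
    (hsolve : G.SolvesDE hk₀ B) (hB : G.Thrifty B) (hp : pebCost (Fin G.n) G.child G.root = p) :
    PebblingReaches B p := by
  intro I
  have hσ := childrenFirst_queryNode hk hB I
  obtain ⟨r, hr⟩ := exists_usedQuery_root (exists_queryNode_eq_root hk hsolve hB I)
  obtain ⟨t, htr, ht⟩ := exists_le_card_pebbles hn hσ hr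
  rw [hp] at ht
  let S := {t | p ≤ #(G.pebbles (queryNode B I) (B.haltTime I) t)}
  exact ⟨Nat.sInf_mem (s := S) ⟨t, ht⟩, r, hr, (Nat.sInf_le (s := S) ht).trans htr⟩

theorem bottleneck_lt_haltTime (hpeb : PebblingReaches B p) (I : G.Var k → Fin k) :
    bottleneck B p I < B.haltTime I := by
  obtain ⟨r, hr, har⟩ := (hpeb I).2
  exact har.trans_lt hr.lt

theorem futureVar_eq_correctVar (hB : G.Thrifty B) {j : ℕ} (hj : j < futureLen B p I) :
    futureVar B p I j = G.correctVar I (futureNode B p I j) :=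
  query_eq_correctVar hB (by unfold futureLen at hj; omega)

theorem apply_futureVar (hB : G.Thrifty B) {j : ℕ} (hj : j < futureLen B p I) :
    I (futureVar B p I j) = G.val I (futureNode B p I j) := by
  rw [futureVar_eq_correctVar hB hj, val_eq_apply_correctVar]

theorem root_not_mem_criticalNodes (hpeb : PebblingReaches B p) (I : G.Var k → Fin k) :
    G.root ∉ criticalNodes B p I := by
  obtain ⟨r, hr, har⟩ := (hpeb I).2
  rw [criticalNodes, root_mem_pebbles_iff hr]
  omega

theorem exists_parent_futureNode (hpeb : PebblingReaches B p) {v : Fin G.n}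
    (hv : v ∈ criticalNodes B p I) :
    ∃ i < futureLen B p I,
      G.child v (futureNode B p I i) ∧ ∀ j < i, futureNode B p I j ≠ v := by
  rcases mem_pebbles.1 hv with ⟨rfl, -⟩ | ⟨w, t, hvw, hw, hat, havoid⟩
  · exact absurd hv (root_not_mem_criticalNodes hpeb I)
  · refine ⟨t - bottleneck B p I, ?_, ?_, fun j hj => havoid _ (by omega) (by omega)⟩
    · have := hw.lt
      unfold futureLen
      omega
    · rwa [futureNode, Nat.add_sub_cancel' hat, hw.apply_eq]

theorem futureNode_not_mem_criticalNodes (hpeb : PebblingReaches B p) {j : ℕ}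
    (hj : j ∈ consumedSteps B p I) : futureNode B p I j ∉ criticalNodes B p I := by
  intro hv
  simp only [consumedSteps, mem_filter, mem_range] at hj
  obtain ⟨i, -, hchild, hbefore⟩ := exists_parent_futureNode hpeb hv
  rcases lt_trichotomy j i with hji | rfl | hij
  · exact hbefore j hji rfl
  · exact G.not_transGen_child_self _ (.single hchild)
  · exact hj.2 ⟨i, hij, .inr hchild⟩

theorem injOn_futureVar_consumedSteps :
    Set.InjOn (futureVar B p I) (consumedSteps B p I) := by
  have hnot_lt : ∀ i ∈ consumedSteps B p I, ∀ j ∈ consumedSteps B p I,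
      futureVar B p I i = futureVar B p I j → ¬ i < j := by
    intro i _ j hj h hij
    simp only [consumedSteps, mem_filter] at hj
    exact hj.2 ⟨i, hij, .inl (congrArg Var.node h).symm⟩
  intro i hi j hj h
  by_contra hne
  rcases Nat.lt_or_gt_of_ne hne with hij | hji
  · exact hnot_lt i hi j hj h hij
  · exact hnot_lt j hj i hi h.symm hji

theorem le_card_criticalVars (hpeb : PebblingReaches B p) (I : G.Var k → Fin k) :
    p ≤ #(criticalVars B p I) := by
  rw [criticalVars, card_image_of_injOn fun u _ v _ h => eq_of_correctVar_eq h]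
  exact (hpeb I).1

theorem card_consumedSteps_add_card_otherVars_le (hB : G.Thrifty B)
    (hpeb : PebblingReaches B p) (I : G.Var k → Fin k) :
    #(consumedSteps B p I) + #(otherVars B p I) ≤ Fintype.card (G.Var k) - p := by
  have hcrit := le_card_criticalVars hpeb I
  have hconsumed : #(consumedSteps B p I) ≤ #(futureVars B p I \ criticalVars B p I) := by
    refine card_le_card_of_injOn _ (fun j hj => ?_) injOn_futureVar_consumedSteps
    have hjL : j < futureLen B p I := by
      simp only [coe_filter, consumedSteps, mem_range] at hj
      exact hj.1
    refine mem_sdiff.2 ⟨mem_image_of_mem _ (mem_range.2 hjL), fun hcv => ?_⟩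
    obtain ⟨v, hv, hvj⟩ := mem_image.1 hcv
    rw [futureVar_eq_correctVar hB hjL] at hvj
    exact futureNode_not_mem_criticalNodes hpeb hj (eq_of_correctVar_eq hvj ▸ hv)
  have hunion : #(criticalVars B p I ∪ futureVars B p I) =
      #(criticalVars B p I) + #(futureVars B p I \ criticalVars B p I) := by
    rw [← card_union_of_disjoint disjoint_sdiff, union_sdiff_self_eq_union]
  have hother : #(otherVars B p I) + #(criticalVars B p I ∪ futureVars B p I) =
      Fintype.card (G.Var k) := card_sdiff_add_card_eq_card (subset_univ _)
  omega

theorem slot_lt (hB : G.Thrifty B) (hpeb : PebblingReaches B p) {z : ℕ ⊕ G.Var k}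
    (hz : z ∈ streamEntries B p I) : slot B p I z < Fintype.card (G.Var k) - p := by
  have := card_consumedSteps_add_card_otherVars_le hB hpeb I
  rcases z with j | x
  · have := card_filter_lt_lt_card (f := id) (show j ∈ consumedSteps B p I from hz)
    exact lt_of_lt_of_le this (by omega)
  · have := card_filter_lt_lt_card (f := varKey) (show x ∈ otherVars B p I from hz)
    simp only [slot]
    omega

theorem injOn_slot : Set.InjOn (slot B p I) (streamEntries B p I) := by
  rintro (i | x) hi (j | y) hj h
  · exact congrArg _ (injOn_card_filter_lt (f := id) (Set.injOn_id _) hi hj h)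
  · have := card_filter_lt_lt_card (f := id) (show i ∈ consumedSteps B p I from hi)
    simp only [slot] at h
    omega
  · have := card_filter_lt_lt_card (f := id) (show j ∈ consumedSteps B p I from hj)
    simp only [slot] at h
    omega
  · exact congrArg _ (injOn_card_filter_lt (f := varKey) varKey_injective.injOn hi hj
      (Nat.add_left_cancel h))

theorem entryValue_eq_of_stream_eq [NeZero k] (hB : G.Thrifty B) (hpeb : PebblingReaches B p)
    (hstream : stream B p I = stream B p I') {z : ℕ ⊕ G.Var k} (hz : z ∈ streamEntries B p I)
    (hz' : z ∈ streamEntries B p I') (hslot : slot B p I z = slot B p I' z) :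
    entryValue B p I z = entryValue B p I' z := by
  rw [← spread_apply_pos (f := entryValue B p I) (d := 0) injOn_slot hz (slot_lt hB hpeb hz),
    ← spread_apply_pos (f := entryValue B p I') (d := 0) injOn_slot hz' (slot_lt hB hpeb hz')]
  exact (congrFun hstream _).trans (congrArg _ (Fin.ext hslot))

theorem futureVar_eq_of_agree (hstate : B.path I' (bottleneck B p I') = B.path I (bottleneck B p I))
    {j : ℕ} (hagree : ∀ i < j, I' (futureVar B p I i) = I (futureVar B p I i)) :
    ∀ i ≤ j, futureVar B p I' i = futureVar B p I i :=
  fun i hi => congrArg B.query (B.path_add_eq hstate hagree i hi)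

theorem revealed_congr {j : ℕ} (hnode : ∀ i < j, futureNode B p I' i = futureNode B p I i)
    {v : Fin G.n} : Revealed B p I' j v ↔ Revealed B p I j v :=
  exists_congr fun i => and_congr_right fun hi => by rw [hnode i hi]

theorem mem_consumedSteps_congr {j : ℕ}
    (hnode : ∀ i ≤ j, futureNode B p I' i = futureNode B p I i)
    (hj : j < futureLen B p I' ↔ j < futureLen B p I) :
    j ∈ consumedSteps B p I' ↔ j ∈ consumedSteps B p I := by
  simp only [consumedSteps, mem_filter, mem_range]
  rw [revealed_congr fun i hi => hnode i hi.le, hnode j le_rfl, hj]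

theorem consumedSteps_congr (hL : futureLen B p I' = futureLen B p I)
    (hnode : ∀ i < futureLen B p I, futureNode B p I' i = futureNode B p I i) :
    consumedSteps B p I' = consumedSteps B p I := by
  ext j
  by_cases hj : j < futureLen B p I
  · exact mem_consumedSteps_congr (fun i hi => hnode i (by omega)) (by rw [hL])
  · simp [consumedSteps, hL, hj]

/-- The answer is either revealed by an earlier future query or read off the stream at a slot
fixed by the earlier ones. -/
theorem apply_futureVar_eq [NeZero k] (hB : G.Thrifty B) (hpeb : PebblingReaches B p)
    (hstate : B.path I' (bottleneck B p I') = B.path I (bottleneck B p I))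
    (hstream : stream B p I = stream B p I') {j : ℕ} (hj : j < futureLen B p I)
    (hj' : j < futureLen B p I')
    (hagree : ∀ i < j, I' (futureVar B p I i) = I (futureVar B p I i)) :
    I' (futureVar B p I j) = I (futureVar B p I j) := by
  have hvar := futureVar_eq_of_agree hstate hagree
  have hnode : ∀ i ≤ j, futureNode B p I' i = futureNode B p I i :=
    fun i hi => congrArg Var.node (hvar i hi)
  have hval : ∀ i ≤ j, I' (futureVar B p I i) = G.val I' (futureNode B p I i) := fun i hi => by
    rw [← hvar i hi, apply_futureVar (I := I') hB (by omega), hnode i hi]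
  by_cases hrev : Revealed B p I j (futureNode B p I j)
  · rw [hval j le_rfl, apply_futureVar hB hj]
    obtain ⟨i, hij, hsame | hchild⟩ := hrev
    · have := hagree i hij
      rwa [hval i hij.le, apply_futureVar hB (hij.trans hj), ← hsame] at this
    · refine val_eq_of_correctVar_eq ?_ hchild
      calc G.correctVar I' (futureNode B p I i) = G.correctVar I' (futureNode B p I' i) := by
            rw [hnode i hij.le]
        _ = futureVar B p I' i := (futureVar_eq_correctVar hB (hij.trans hj')).symm
        _ = futureVar B p I i := hvar i hij.le
        _ = G.correctVar I (futureNode B p I i) := futureVar_eq_correctVar hB (hij.trans hj)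
  · have hC : j ∈ consumedSteps B p I := by simp [consumedSteps, hj, hrev]
    have hC' : j ∈ consumedSteps B p I' :=
      (mem_consumedSteps_congr hnode (iff_of_true hj' hj)).2 hC
    have hslot : slot B p I (.inl j) = slot B p I' (.inl j) :=
      card_filter_lt_congr fun i hi =>
        (mem_consumedSteps_congr (fun i' hi' => hnode i' (by simp at hi; omega))
          (iff_of_true (by simp at hi; omega) (by simp at hi; omega))).symm
    have := entryValue_eq_of_stream_eq hB hpeb hstream hC hC' hslot
    simp only [entryValue, Sum.elim_inl] at this
    rw [this, hvar j le_rfl]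

theorem future_agree [NeZero k] {hk₀ : 0 < k} (hsolve : G.SolvesDE hk₀ B) (hB : G.Thrifty B)
    (hpeb : PebblingReaches B p)
    (hstate : B.path I' (bottleneck B p I') = B.path I (bottleneck B p I))
    (hstream : stream B p I = stream B p I') :
    ∀ j ≤ futureLen B p I,
      j ≤ futureLen B p I' ∧ ∀ i < j, I' (futureVar B p I i) = I (futureVar B p I i) := by
  intro j hj
  induction j with
  | zero => exact ⟨Nat.zero_le _, fun i hi => absurd hi (Nat.not_lt_zero i)⟩
  | succ j ih =>
    obtain ⟨hjL', hagree⟩ := ih (by omega)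
    have hj' : j < futureLen B p I' := by
      refine lt_of_le_of_ne hjL' fun heq => ?_
      have hlive := BP.out_path_of_lt_haltTime (B := B) (I := I) (s := bottleneck B p I + j)
        (by unfold futureLen at hj; omega)
      have hend : bottleneck B p I' + j = B.haltTime I' := by
        have := bottleneck_lt_haltTime hpeb I'
        unfold futureLen at heq
        omega
      rw [← B.path_add_eq hstate hagree j le_rfl, hend, BP.out_path_haltTime hsolve I'] at hlive
      cases hlive
    refine ⟨hj', fun i hi => ?_⟩
    rcases Nat.lt_succ_iff_lt_or_eq.1 hi with hi | rfl
    · exact hagree i hi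
    · exact apply_futureVar_eq hB hpeb hstate hstream (by omega) hj' hagree

theorem criticalNodes_subset (hpeb : PebblingReaches B p) (hL : futureLen B p I' = futureLen B p I)
    (hnode : ∀ i < futureLen B p I, futureNode B p I' i = futureNode B p I i) :
    criticalNodes B p I ⊆ criticalNodes B p I' := by
  intro v hv
  have h := bottleneck_lt_haltTime hpeb I
  have h' := bottleneck_lt_haltTime hpeb I'
  unfold futureLen at hL hnode
  exact mem_pebbles_shift hnode (by omega) (by omega) hv
    fun hroot => root_not_mem_criticalNodes hpeb I (hroot ▸ hv)

theorem val_eq_of_mem_criticalNodes (hB : G.Thrifty B) (hpeb : PebblingReaches B p)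
    (hL : futureLen B p I' = futureLen B p I)
    (hvar : ∀ i < futureLen B p I, futureVar B p I' i = futureVar B p I i) {v : Fin G.n}
    (hv : v ∈ criticalNodes B p I) : G.val I' v = G.val I v := by
  obtain ⟨i, hi, hchild, -⟩ := exists_parent_futureNode hpeb hv
  refine val_eq_of_correctVar_eq ?_ hchild
  calc G.correctVar I' (futureNode B p I i) = G.correctVar I' (futureNode B p I' i) := by
        rw [show futureNode B p I' i = futureNode B p I i from congrArg Var.node (hvar i hi)]
    _ = futureVar B p I' i := (futureVar_eq_correctVar hB (hL ▸ hi)).symm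
    _ = futureVar B p I i := hvar i hi
    _ = G.correctVar I (futureNode B p I i) := futureVar_eq_correctVar hB hi

/-- Going up the dag in the order of `varKey`, one knows at each variable whether it is critical,
hence where the stream stores it. -/
theorem eq_of_agree_on_future [NeZero k] (hB : G.Thrifty B) (hpeb : PebblingReaches B p)
    (hfut : futureVars B p I' = futureVars B p I) (hfutval : ∀ x ∈ futureVars B p I, I' x = I x)
    (hcrit : criticalNodes B p I' = criticalNodes B p I)
    (hcritval : ∀ v ∈ criticalNodes B p I, G.val I' v = G.val I v)
    (hC : #(consumedSteps B p I') = #(consumedSteps B p I))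
    (hstream : stream B p I = stream B p I') : I' = I := by
  funext x
  induction x using (measure varKey).wf.induction with
  | _ x ih =>
    have hcv : ∀ v, G.numDescendants v ≤ G.numDescendants x.node →
        G.correctVar I' v = G.correctVar I v := fun v hv =>
      correctVar_congr fun y hy => ih y (varKey_lt_varKey ((numDescendants_lt hy).trans_le hv))
    have hcritIff : ∀ y, varKey y ≤ varKey x →
        (y ∈ criticalVars B p I' ↔ y ∈ criticalVars B p I) := by
      intro y hy
      have hdesc := numDescendants_le_of_varKey_le hy
      simp only [criticalVars, mem_image, hcrit]
      constructor
      · rintro ⟨v, hv, rfl⟩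
        exact ⟨v, hv, (hcv v (by simpa using hdesc)).symm⟩
      · rintro ⟨v, hv, rfl⟩
        exact ⟨v, hv, hcv v (by simpa using hdesc)⟩
    by_cases hxc : x ∈ criticalVars B p I
    · obtain ⟨v, hv, rfl⟩ := mem_image.1 hxc
      calc I' (G.correctVar I v) = I' (G.correctVar I' v) := by rw [hcv v (by simp)]
        _ = G.val I' v := (val_eq_apply_correctVar I' v).symm
        _ = G.val I v := hcritval v hv
        _ = I (G.correctVar I v) := val_eq_apply_correctVar I v
    by_cases hxf : x ∈ futureVars B p I
    · exact hfutval x hxf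
    have hxo : x ∈ otherVars B p I := by simp [otherVars, hxc, hxf]
    have hxo' : x ∈ otherVars B p I' := by
      simp [otherVars, hfut, hxf, hcritIff x le_rfl, hxc]
    have hslot : slot B p I (.inr x) = slot B p I' (.inr x) := by
      simp only [slot, hC]
      congr 1
      exact card_filter_lt_congr fun y hy => by
        simp only [otherVars, mem_sdiff, mem_union, hfut, hcritIff y hy.le]
    exact (entryValue_eq_of_stream_eq hB hpeb hstream hxo hxo' hslot).symm

theorem encode_injective [NeZero k] {hk₀ : 0 < k} (hsolve : G.SolvesDE hk₀ B)
    (hB : G.Thrifty B) (hpeb : PebblingReaches B p) : Function.Injective (encode B p) := by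
  intro I I' h
  obtain ⟨hstate, hstream⟩ := Prod.ext_iff.1 h
  obtain ⟨hle, hagree⟩ := future_agree hsolve hB hpeb hstate.symm hstream _ le_rfl
  have hL : futureLen B p I' = futureLen B p I :=
    le_antisymm (future_agree hsolve hB hpeb hstate hstream.symm _ le_rfl).1 hle
  have hvar : ∀ i < futureLen B p I, futureVar B p I' i = futureVar B p I i :=
    fun i hi => futureVar_eq_of_agree hstate.symm hagree i hi.le
  have hnode : ∀ i < futureLen B p I, futureNode B p I' i = futureNode B p I i :=
    fun i hi => congrArg Var.node (hvar i hi)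
  have hcrit : criticalNodes B p I' = criticalNodes B p I :=
    (criticalNodes_subset hpeb hL.symm fun i hi => (hnode i (hL ▸ hi)).symm).antisymm
      (criticalNodes_subset hpeb hL hnode)
  refine (eq_of_agree_on_future hB hpeb ?_ ?_ hcrit
    (fun v hv => val_eq_of_mem_criticalNodes hB hpeb hL hvar hv)
    (by rw [consumedSteps_congr hL hnode]) hstream).symm
  · simp only [futureVars, hL]
    exact image_congr fun i hi => hvar i (mem_range.1 hi)
  · intro x hx
    obtain ⟨i, hi, rfl⟩ := mem_image.1 hx
    exact hagree i (mem_range.1 hi)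

end

end RootedDag

theorem pow_le_card_of_injective {α β : Type*} [Fintype α] [DecidableEq α] [Fintype β]
    {k p : ℕ} (hk : 0 < k) (hp : p ≤ Fintype.card α)
    {f : (α → Fin k) → β × (Fin (Fintype.card α - p) → Fin k)}
    (hf : Function.Injective f) : k ^ p ≤ Fintype.card β := by
  have hcard : k ^ Fintype.card α ≤ Fintype.card β * k ^ (Fintype.card α - p) := by
    simpa using Fintype.card_le_of_injective f hf
  have : k ^ (Fintype.card α - p) * k ^ p ≤ k ^ (Fintype.card α - p) * Fintype.card β := by
    rwa [← pow_add, Nat.sub_add_cancel hp, mul_comm]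
  exact Nat.le_of_mul_le_mul_left this (by positivity)

/-- If the connected rooted dag `G` (with at least two nodes) has black pebbling cost `p`,
then for any `k ≥ 2` every deterministic thrifty `k`-way branching program solving `DE^G_k`
has at least `k^p` states. -/
theorem stmt1 (G : RootedDag) (hn : 2 ≤ G.n) (k : ℕ) (hk : 2 ≤ k) (p : ℕ)
    (hp : pebCost (Fin G.n) G.child G.root = p)
    (B : BP (G.Var k) k Bool)
    (hsolve : G.SolvesDE (by omega) B) (hthrifty : G.Thrifty B) :
    k ^ p ≤ B.size := by
  have : NeZero k := ⟨by omega⟩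
  have hpeb := RootedDag.pebblingReaches hn hk hsolve hthrifty hp
  have hpN : p ≤ Fintype.card (G.Var k) :=
    (RootedDag.le_card_criticalVars hpeb fun _ => 0).trans (card_le_univ _)
  exact @pow_le_card_of_injective _ _ _ _ B.finState _ _ (by omega) hpN _
    (RootedDag.encode_injective hsolve hthrifty hpeb)
end

section
/- In the reduction from DE^G_k to GEN(m) with m = 3kn + n + 1, for every input I of DE^G_k, the instance T^I of GEN(m) is a YES instance if and only if I is a YES instance of DE^G_k (i.e., val(root)[I] = 1). -/
/-- A rooted dag in which every internal node has an ordered pair of children (left, right).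
`children u = none` means `u` is a leaf; the root is the unique node that is nobody's child. -/
structure BinDag where
  n : ℕ
  children : Fin n → Option (Fin n × Fin n)
  wf : WellFounded fun v u : Fin n => ∃ c, children u = some c ∧ (v = c.1 ∨ v = c.2)
  root : Fin n
  root_no_parent : ∀ u c, children u = some c → c.1 ≠ root ∧ c.2 ≠ root
  root_unique : ∀ u, u ≠ root → ∃ p c, children p = some c ∧ (u = c.1 ∨ u = c.2)

namespace BinDag

/-- The child relation: `v` is a child of `u`. -/
def childRel (G : BinDag) : Fin G.n → Fin G.n → Prop :=
  fun v u => ∃ c, G.children u = some c ∧ (v = c.1 ∨ v = c.2)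

/-- The `DE^G_k` variables for a binary dag: a leaf variable `l_u` for each leaf `u`, and a
variable `f_u(b₁, b₂)` for each internal node `u` and `b₁, b₂ ∈ [k]`. -/
def Var (G : BinDag) (k : ℕ) : Type :=
  {u : Fin G.n // G.children u = none} ⊕
    (Σ _u : {u : Fin G.n // (G.children u).isSome}, Fin k × Fin k)

/-- The value of each node under input `I`: leaves take their `l` value, and an internal node
applies its function to the values of its two children. -/
noncomputable def val (G : BinDag) {k : ℕ} (I : G.Var k → Fin k) : Fin G.n → Fin k :=
  WellFounded.fix (C := fun _ => Fin k) G.wf fun u ih =>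
    match h : G.children u with
    | none => I (Sum.inl ⟨u, h⟩)
    | some c => I (Sum.inr ⟨⟨u, by rw [h]; rfl⟩,
        (ih c.1 ⟨c, h, Or.inl rfl⟩, ih c.2 ⟨c, h, Or.inr rfl⟩)⟩)

/-- `B` solves `DE^G_k` for a binary dag `G`: on every input it halts and outputs `true` iff
the value of the root is `1` (the first element of `[k]`). -/
def SolvesDE (G : BinDag) {k : ℕ} (hk : 0 < k) (B : BP (G.Var k) k Bool) : Prop :=
  ∀ I : G.Var k → Fin k, ∃ t, B.VisitsAt I t ∧
    B.out (B.path I t) = some (decide (G.val I G.root = ⟨0, hk⟩))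

/-- `B` is thrifty: whenever a state querying `f_u(b₁, b₂)` is visited by input `I`, then
`(b₁, b₂)` is exactly the pair of values of the children of `u` under `I`. -/
def Thrifty (G : BinDag) {k : ℕ} (B : BP (G.Var k) k Bool) : Prop :=
  ∀ (I : G.Var k → Fin k) (q : B.State) (u : {u : Fin G.n // (G.children u).isSome})
    (b : Fin k × Fin k), B.Visits I q → B.query q = Sum.inr ⟨u, b⟩ →
    ∀ c, G.children u.1 = some c → b.1 = G.val I c.1 ∧ b.2 = G.val I c.2

end BinDag

/-- The closure of `{1}` under the binary operation `T` on `[m]` (element `j ∈ [m]` is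
represented by the index `j - 1 : Fin m`, so `1` is index `0`). -/
inductive Generated {m : ℕ} (T : Fin m → Fin m → Fin m) : Fin m → Prop
  | one (h : 0 < m) : Generated T ⟨0, h⟩
  | app {x y : Fin m} : Generated T x → Generated T y → Generated T (T x y)

/-- `B` solves `GEN(m)`: on every instance `T : [m]×[m] → [m]` it halts and outputs `true`
iff `m` (index `m - 1`) is in the closure of `{1}` under `T`. -/
def SolvesGEN {m : ℕ} (hm : 0 < m) (B : BP (Fin m × Fin m) m Bool) : Prop :=
  ∀ T : Fin m × Fin m → Fin m, ∃ t b, B.VisitsAt T t ∧ B.out (B.path T t) = some b ∧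
    (b = true ↔ Generated (fun x y => T (x, y)) ⟨m - 1, Nat.sub_lt hm one_pos⟩)

/-- `B` is semantic-incremental: for every state `q` querying variable `(x, y)` and every
input `T` whose computation path visits `q`, each of `x`, `y` is either `1` (index `0`) or
labels an earlier edge on `T`'s computation path (edge labels are the answers to the queries). -/
def SemIncr {m : ℕ} (B : BP (Fin m × Fin m) m Bool) : Prop :=
  ∀ (T : Fin m × Fin m → Fin m) (t : ℕ), B.VisitsAt T t → B.out (B.path T t) = none →
    ∀ z ∈ ({(B.query (B.path T t)).1, (B.query (B.path T t)).2} : Set (Fin m)),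
      (z : ℕ) = 0 ∨ ∃ s < t, T (B.query (B.path T s)) = z

/-- The static data of the reduction from `DE^G_k` to `GEN(m)`, `m = 3kn + n + 1`.
Element `j ∈ [m]` is represented by the index `j - 1 : Fin m` (so `1` is index `0`); node
`u : Fin n` (i.e., node `u+1 ∈ [n]`) is the element with index `u`.  The leaves are listed in
a fixed order `w 0, …, w (l-1)`.  The elements `{n+2, …, m}` (indices `≥ n+1`) are injectively
assigned names `gN u a` ("node `u` has value `a`") and `gA u s a` ("value `a` flows along the
left (`s = false`) or right (`s = true`) in-arc of `u`"), with `gN root 1 = m` (index `m-1`). -/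
structure RedSetup (G : BinDag) (k : ℕ) where
  hn : 2 ≤ G.n
  hk : 2 ≤ k
  hdisj : ∀ u c, G.children u = some c → c.1 ≠ c.2
  m : ℕ
  hm : m = 3 * k * G.n + G.n + 1
  l : ℕ
  w : Fin l → Fin G.n
  w_leaf : ∀ t, G.children (w t) = none
  w_inj : Function.Injective w
  w_surj : ∀ u, G.children u = none → ∃ t, w t = u
  gN : Fin G.n → Fin k → Fin m
  gA : Fin G.n → Bool → Fin k → Fin m
  g_inj : Function.Injective fun x : (Fin G.n × Fin k) ⊕ (Fin G.n × Bool × Fin k) =>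
    match x with
    | .inl (u, a) => gN u a
    | .inr (u, s, a) => gA u s a
  g_range_N : ∀ u a, G.n + 1 ≤ (gN u a : ℕ)
  g_range_A : ∀ u s a, G.n + 1 ≤ (gA u s a : ℕ)
  g_root : (gN G.root ⟨0, by omega⟩ : ℕ) = m - 1

namespace RedSetup

variable {G : BinDag} {k : ℕ}

theorem m_pos (R : RedSetup G k) : 0 < R.m := R.hm ▸ Nat.succ_pos _

theorem lt_m (R : RedSetup G k) {j : ℕ} (h : j ≤ G.n + 1) : j < R.m := by
  have h1 : 2 * 2 ≤ k * G.n := Nat.mul_le_mul R.hk R.hn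
  have h2 : R.m = 3 * (k * G.n) + G.n + 1 := by rw [R.hm, Nat.mul_assoc]
  omega

/-- The element with index `j` of `[m]`. -/
def el (R : RedSetup G k) (j : ℕ) (h : j < R.m) : Fin R.m := ⟨j, h⟩

/-- The pairs `(x, y)` that are "used", i.e., appear as the left-hand side of one of the
explicit defining equations of `T^I`. -/
def Used (R : RedSetup G k) (x y : Fin R.m) : Prop :=
  ((x : ℕ) = 0 ∧ (y : ℕ) < G.n) ∨
  ((x : ℕ) = 0 ∧ (y : ℕ) = G.n) ∨
  ((x : ℕ) = 0 ∧ ∃ (t : ℕ) (ht : t + 1 < R.l) (a : Fin k),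
      y = R.gN (R.w ⟨t, by omega⟩) a) ∨
  (∃ (u : Fin G.n) (c : Fin G.n × Fin G.n) (a : Fin k), G.children u = some c ∧
      (x : ℕ) = (u : ℕ) + 1 ∧ (y = R.gN c.1 a ∨ y = R.gN c.2 a)) ∨
  (∃ (u : Fin G.n) (c : Fin G.n × Fin G.n) (b₁ b₂ : Fin k), G.children u = some c ∧
      x = R.gA u false b₁ ∧ y = R.gA u true b₂)

/-- `T` is the `GEN(m)` instance `T^I` associated to the `DE^G_k` input `I` by the reduction:
`T(1, u) = u + 1` for `u ∈ [n]`; `T(1, n+1) = gN (w 1) (l_{w 1})`;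
`T(1, gN (w t) a) = gN (w (t+1)) (l_{w (t+1)})`; for internal `u` with children `(v₁, v₂)`:
`T(u + 1, gN vᵢ a) = gA u side a` and `T(gA u false b₁, gA u true b₂) = gN u (f_u(b₁, b₂))`;
all unused variables are set to `1`. -/
def Defines (R : RedSetup G k) (I : G.Var k → Fin k) (T : Fin R.m → Fin R.m → Fin R.m) :
    Prop :=
  (∀ u : Fin G.n, T (R.el 0 R.m_pos) (R.el u (R.lt_m (by omega)))
      = R.el ((u : ℕ) + 1) (R.lt_m (by omega))) ∧
  (∀ h0 : 0 < R.l, T (R.el 0 R.m_pos) (R.el G.n (R.lt_m (by omega)))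
      = R.gN (R.w ⟨0, h0⟩) (G.val I (R.w ⟨0, h0⟩))) ∧
  (∀ (t : ℕ) (ht : t + 1 < R.l) (a : Fin k),
      T (R.el 0 R.m_pos) (R.gN (R.w ⟨t, by omega⟩) a)
        = R.gN (R.w ⟨t + 1, ht⟩) (G.val I (R.w ⟨t + 1, ht⟩))) ∧
  (∀ (u : Fin G.n) (c : Fin G.n × Fin G.n) (a : Fin k), G.children u = some c →
      T (R.el ((u : ℕ) + 1) (R.lt_m (by omega))) (R.gN c.1 a) = R.gA u false a ∧
      T (R.el ((u : ℕ) + 1) (R.lt_m (by omega))) (R.gN c.2 a) = R.gA u true a) ∧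
  (∀ (u : Fin G.n) (c : Fin G.n × Fin G.n) (b₁ b₂ : Fin k) (h : G.children u = some c),
      T (R.gA u false b₁) (R.gA u true b₂)
        = R.gN u (I (Sum.inr ⟨⟨u, by rw [h]; rfl⟩, (b₁, b₂)⟩))) ∧
  (∀ x y, ¬ R.Used x y → T x y = R.el 0 R.m_pos)

end RedSetup


/-!
Call an element of `[m]` *correct* for `I` if it is one of `1, …, n+1`, a node name `g(u, a)`
with `a = val(u)[I]`, or an arc name `g(vu, a)` with `a = val(v)[I]`.  `1` is correct, unused
pairs give `1`, and every defining equation of `T^I` with correct arguments has a correct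
result: the node and arc names among the arguments carry the true values, so the right-hand
side does too.  Hence everything generated is correct, and since `m = g(root, 1)`, generating
`m` forces `val(root)[I] = 1`.  Conversely, `1` generates `2, …, n+1`, then along the leaf chain
every `g(w_t, val(w_t))`, and by induction up the dag every `g(u, val(u))`.
-/

theorem Generated.of_app_eq {m : ℕ} {T : Fin m → Fin m → Fin m} {x y z : Fin m}
    (hx : Generated T x) (hy : Generated T y) (h : T x y = z) : Generated T z :=
  h ▸ hx.app hy

namespace BinDag

variable (G : BinDag) {k : ℕ} (I : G.Var k → Fin k)

theorem val_eq_of_children_eq_some {u : Fin G.n} {c : Fin G.n × Fin G.n}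
    (h : G.children u = some c) :
    G.val I u = I (Sum.inr ⟨⟨u, by rw [h]; rfl⟩, (G.val I c.1, G.val I c.2)⟩) := by
  rw [BinDag.val, WellFounded.fix_eq]
  split
  · next h' => simp [h] at h'
  · next c' h' =>
    obtain rfl : c' = c := Option.some_injective _ (h'.symm.trans h)
    rfl

theorem exists_leaf (u : Fin G.n) : ∃ v, G.children v = none := by
  obtain ⟨v, -, hv⟩ := G.wf.has_min Set.univ ⟨u, trivial⟩
  refine ⟨v, Option.eq_none_iff_forall_ne_some.2 fun c hc => ?_⟩
  exact hv c.1 trivial ⟨c, hc, Or.inl rfl⟩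

end BinDag

namespace RedSetup

variable {G : BinDag} {k : ℕ} (R : RedSetup G k)

theorem gN_inj {u u' : Fin G.n} {a a' : Fin k} (h : R.gN u a = R.gN u' a') :
    u = u' ∧ a = a' := by
  simpa using @R.g_inj (.inl (u, a)) (.inl (u', a')) h

theorem gA_inj {u u' : Fin G.n} {s s' : Bool} {a a' : Fin k}
    (h : R.gA u s a = R.gA u' s' a') : u = u' ∧ s = s' ∧ a = a' := by
  simpa using @R.g_inj (.inr (u, s, a)) (.inr (u', s', a')) h

theorem gN_ne_gA (u u' : Fin G.n) (s : Bool) (a a' : Fin k) : R.gN u a ≠ R.gA u' s a' := by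
  intro h
  simpa using @R.g_inj (.inl (u, a)) (.inr (u', s, a')) h

theorem gN_root_one :
    R.gN G.root ⟨0, lt_of_lt_of_le two_pos R.hk⟩ = ⟨R.m - 1, Nat.sub_lt R.m_pos one_pos⟩ :=
  Fin.ext R.g_root

theorem l_pos : 0 < R.l := by
  obtain ⟨v, hv⟩ := G.exists_leaf ⟨0, by have := R.hn; omega⟩
  obtain ⟨t, -⟩ := R.w_surj v hv
  exact t.pos

variable (I : G.Var k → Fin k)

/-- The `bif` selects the child at the tail of the left (`false`) or right (`true`) in-arc. -/
def IsCorrect (z : Fin R.m) : Prop :=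
  (z : ℕ) ≤ G.n ∨ (∃ u, z = R.gN u (G.val I u)) ∨
    ∃ u c s, G.children u = some c ∧ z = R.gA u s (G.val I (bif s then c.2 else c.1))

variable {R I}

theorem IsCorrect.eq_val_of_gN {v : Fin G.n} {a : Fin k} (h : R.IsCorrect I (R.gN v a)) :
    a = G.val I v := by
  rcases h with hle | ⟨u, hu⟩ | ⟨u, c, s, -, hu⟩
  · exact absurd hle (by have := R.g_range_N v a; omega)
  · obtain ⟨rfl, rfl⟩ := R.gN_inj hu
    rfl
  · exact absurd hu (R.gN_ne_gA _ _ _ _ _)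

theorem IsCorrect.eq_val_of_gA {u : Fin G.n} {c : Fin G.n × Fin G.n} {s : Bool} {a : Fin k}
    (hc : G.children u = some c) (h : R.IsCorrect I (R.gA u s a)) :
    a = G.val I (bif s then c.2 else c.1) := by
  rcases h with hle | ⟨v, hv⟩ | ⟨v, c', s', hc', hv⟩
  · exact absurd hle (by have := R.g_range_A u s a; omega)
  · exact absurd hv.symm (R.gN_ne_gA _ _ _ _ _)
  · obtain ⟨rfl, rfl, rfl⟩ := R.gA_inj hv
    obtain rfl : c' = c := Option.some_injective _ (hc'.symm.trans hc)
    rfl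

variable {T : Fin R.m → Fin R.m → Fin R.m}

theorem Defines.arc (hT : R.Defines I T) {u : Fin G.n} {c : Fin G.n × Fin G.n}
    (hc : G.children u = some c) (s : Bool) (a : Fin k) :
    T (R.el ((u : ℕ) + 1) (R.lt_m (by omega))) (R.gN (bif s then c.2 else c.1) a)
      = R.gA u s a := by
  cases s
  exacts [(hT.2.2.2.1 u c a hc).1, (hT.2.2.2.1 u c a hc).2]

theorem Defines.isCorrect_app (hT : R.Defines I T) {x y : Fin R.m}
    (hx : R.IsCorrect I x) (hy : R.IsCorrect I y) : R.IsCorrect I (T x y) := by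
  have ⟨hnode, hfirst, hnext, _, hop, hunused⟩ := hT
  by_cases hused : R.Used x y
  swap
  · exact Or.inl (by simp [hunused x y hused, el])
  rcases hused with ⟨hx0, hyn⟩ | ⟨hx0, hyn⟩ | ⟨hx0, t, ht, a, rfl⟩ |
    ⟨u, c, a, hc, hxu, hyc⟩ | ⟨u, c, b₁, b₂, hc, rfl, rfl⟩
  · rw [show x = R.el 0 R.m_pos from Fin.ext hx0,
      show y = R.el (⟨y, hyn⟩ : Fin G.n) (R.lt_m (by omega)) from rfl, hnode]
    exact Or.inl (by simp only [el]; omega)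
  · rw [show x = R.el 0 R.m_pos from Fin.ext hx0,
      show y = R.el G.n (R.lt_m (by omega)) from Fin.ext hyn]
    exact Or.inr (Or.inl ⟨_, hfirst R.l_pos⟩)
  · obtain rfl : x = R.el 0 R.m_pos := Fin.ext hx0
    exact Or.inr (Or.inl ⟨_, hnext t ht a⟩)
  · rw [show x = R.el ((u : ℕ) + 1) (R.lt_m (by omega)) from Fin.ext hxu]
    obtain ⟨s, rfl⟩ : ∃ s, y = R.gN (bif s then c.2 else c.1) a :=
      hyc.elim (fun h => ⟨false, h⟩) (fun h => ⟨true, h⟩)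
    rw [hT.arc hc, hy.eq_val_of_gN]
    exact Or.inr (Or.inr ⟨u, c, s, hc, rfl⟩)
  · rw [hop u c b₁ b₂ hc, hx.eq_val_of_gA hc, hy.eq_val_of_gA hc]
    exact Or.inr (Or.inl ⟨u, by rw [G.val_eq_of_children_eq_some I hc]; rfl⟩)

theorem Defines.isCorrect_of_generated (hT : R.Defines I T) {z : Fin R.m}
    (hz : Generated T z) : R.IsCorrect I z := by
  induction hz with
  | one => exact Or.inl (Nat.zero_le _)
  | app _ _ hx hy => exact hT.isCorrect_app hx hy

theorem Defines.generated_of_le (hT : R.Defines I T) {j : ℕ} (hj : j ≤ G.n) :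
    Generated T ⟨j, R.lt_m (hj.trans (Nat.le_succ _))⟩ := by
  induction j with
  | zero => exact .one _
  | succ i ih =>
    exact (Generated.one R.m_pos).of_app_eq (ih (by omega)) (hT.1 ⟨i, by omega⟩)

theorem Defines.generated_leaf_chain (hT : R.Defines I T) (t : ℕ) (ht : t < R.l) :
    Generated T (R.gN (R.w ⟨t, ht⟩) (G.val I (R.w ⟨t, ht⟩))) := by
  induction t with
  | zero => exact (Generated.one R.m_pos).of_app_eq (hT.generated_of_le (j := G.n) (by omega)) (hT.2.1 ht)
  | succ i ih =>
    exact (Generated.one R.m_pos).of_app_eq (ih (by omega)) (hT.2.2.1 i ht _)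

theorem Defines.generated_gN_val (hT : R.Defines I T) (u : Fin G.n) :
    Generated T (R.gN u (G.val I u)) := by
  induction u using G.wf.induction with
  | _ v ih =>
    cases hc : G.children v with
    | none =>
      obtain ⟨⟨t, ht⟩, rfl⟩ := R.w_surj v hc
      exact hT.generated_leaf_chain t ht
    | some c =>
      have harc (s : Bool) : Generated T (R.gA v s (G.val I (bif s then c.2 else c.1))) :=
        (hT.generated_of_le (j := v + 1) (by omega)).of_app_eq
          (ih _ ⟨c, hc, by cases s <;> simp⟩) (hT.arc hc s _)
      rw [G.val_eq_of_children_eq_some I hc]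
      exact (harc false).of_app_eq (harc true) (hT.2.2.2.2.1 v c _ _ hc)

end RedSetup

/-- Correctness of the reduction: for every input `I` of `DE^G_k`, the `GEN(m)` instance `T^I`
is a YES instance (element `m` is generated) iff `I` is a YES instance (`val(root)[I] = 1`). -/
theorem stmt5 (G : BinDag) (k : ℕ) (R : RedSetup G k)
    (I : G.Var k → Fin k) (T : Fin R.m → Fin R.m → Fin R.m) (hT : R.Defines I T) :
    Generated T ⟨R.m - 1, Nat.sub_lt R.m_pos one_pos⟩ ↔
      G.val I G.root = ⟨0, by have := R.hk; omega⟩ := by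
  rw [← R.gN_root_one]
  constructor
  · exact fun h => (hT.isCorrect_of_generated h).eq_val_of_gN.symm
  · intro h
    simpa [h] using hT.generated_gN_val G.root
end

section
/- The complete binary tree T^h of height h (with 2^h − 1 nodes), viewed as a rooted dag with arcs from children to parents, has black pebbling cost exactly h for all h ≥ 1. -/
/-!
Upper bound: a leaf costs one pebble; for a node of height `k + 2`, pebble the left child with
`k + 1` pebbles, keep that pebble while pebbling the right child with `k + 1` more, then slide
both pebbles onto the node.

Lower bound: let `t₀` be the step just before `v` is first pebbled, so both children carry
pebbles at `t₀`, and for each child take the last time `≤ t₀` at which its subtree was empty.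
By induction the child whose subtree was emptied later forces `k + 1` pebbles into its subtree
at some later time, while the other subtree is still occupied: `k + 2` pebbles below `v`.
-/

open Finset Relation

theorem Relation.ReflTransGen.exists_seq {β : Type*} {r : β → β → Prop} {a b : β}
    (h : ReflTransGen r a b) :
    ∃ (f : ℕ → β) (T : ℕ), f 0 = a ∧ f T = b ∧ ∀ t < T, r (f t) (f (t + 1)) := by
  induction h with
  | refl => exact ⟨fun _ => a, 0, rfl, rfl, by simp⟩
  | @tail c d _ hcd ih =>
    obtain ⟨f, T, h0, hT, hf⟩ := ih
    refine ⟨fun t => if t ≤ T then f t else d, T + 1, by simp [h0], by simp, fun t ht => ?_⟩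
    rcases (by omega : t < T ∨ t = T) with ht | rfl
    · simpa [ht.le, Nat.succ_le_of_lt ht] using hf t ht
    · simpa [hT] using hcd

theorem Nat.exists_lt_not_and_succ {p : ℕ → Prop} {T : ℕ} (h0 : ¬p 0) (hT : p T) :
    ∃ t < T, ¬p t ∧ p (t + 1) := by
  induction T with
  | zero => exact absurd hT h0
  | succ T ih =>
    by_cases hp : p T
    · obtain ⟨t, ht, h⟩ := ih hp
      exact ⟨t, by omega, h⟩
    · exact ⟨T, by omega, hp, hT⟩

theorem Nat.exists_le_last {p : ℕ → Prop} (h0 : p 0) (n : ℕ) :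
    ∃ s ≤ n, p s ∧ ∀ t, s < t → t ≤ n → ¬p t := by
  induction n with
  | zero => exact ⟨0, le_rfl, h0, fun t h h' => by omega⟩
  | succ n ih =>
    by_cases hp : p (n + 1)
    · exact ⟨n + 1, le_rfl, hp, fun t h h' => by omega⟩
    · obtain ⟨s, hs, hps, hlast⟩ := ih
      refine ⟨s, by omega, hps, fun t h h' => ?_⟩
      rcases (by omega : t ≤ n ∨ t = n + 1) with ht | rfl
      · exact hlast t h ht
      · exact hp

theorem Nat.div_two_pow_ne_succ {n m i j : ℕ} (hm : 0 < m) (hi : n / 2 ^ i = 2 * m) :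
    n / 2 ^ j ≠ 2 * m + 1 := by
  intro hj
  have half : ∀ x d, x / 2 ^ (d + 1) ≤ x / 2 := fun x d =>
    Nat.div_le_div_left (Nat.le_self_pow (by omega) 2) (by norm_num)
  rcases le_total i j with hij | hij
  · obtain ⟨d, rfl⟩ := Nat.exists_eq_add_of_le hij
    rw [pow_add, ← Nat.div_div_eq_div_mul, hi] at hj
    rcases d with _ | d
    · simp at hj
    · have := half (2 * m) d
      omega
  · obtain ⟨d, rfl⟩ := Nat.exists_eq_add_of_le hij
    rw [pow_add, ← Nat.div_div_eq_div_mul, hj] at hi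
    rcases d with _ | d
    · simp at hi
    · have := half (2 * m + 1) d
      omega

section Pebbling

variable {α : Type} [DecidableEq α] (child : α → α → Prop)

def PebMoveWithin (p : ℕ) (C D : Finset α) : Prop := PebMove child C D ∧ #D ≤ p

def IsPebblingSeq (f : ℕ → Finset α) (T : ℕ) : Prop :=
  ∀ t < T, PebMove child (f t) (f (t + 1)) ∨ f (t + 1) = f t

def CanPebble (S : Finset α) (v : α) (k : ℕ) : Prop :=
  ∀ C, Disjoint C S → ReflTransGen (PebMoveWithin child (#C + k)) C (insert v C)

def NeedsPebbles (S : Finset α) (v : α) (k : ℕ) : Prop :=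
  ∀ f T, IsPebblingSeq child f T → Disjoint (f 0) S → v ∈ f T → ∃ τ ≤ T, k ≤ #(f τ ∩ S)

theorem pebCost_eq {root : α} {p : ℕ} (hup : ReflTransGen (PebMoveWithin child p) ∅ {root})
    (hlow : ∀ f T, IsCompletePebbling child root f T → ∃ t ≤ T, p ≤ #(f t)) :
    pebCost α child root = p := by
  have hp : p ∈ {p | ∃ f T, IsCompletePebbling child root f T ∧ ∀ t ≤ T, #(f t) ≤ p} := by
    obtain ⟨f, T, h0, hT, hf⟩ := hup.exists_seq
    refine ⟨f, T, ⟨h0, by simp [hT], fun t ht => Or.inl (hf t ht).1⟩, fun t ht => ?_⟩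
    rcases t with _ | t
    · simp [h0]
    · exact (hf t (by omega)).2
  obtain ⟨f, T, hf, hcard⟩ := Nat.sInf_mem ⟨p, hp⟩
  obtain ⟨t, ht, hpt⟩ := hlow f T hf
  exact le_antisymm (Nat.sInf_le hp) (hpt.trans (hcard t ht))

theorem canPebble_of_forall_not_child {S : Finset α} {v : α} (hv : ∀ w, ¬child w v) :
    CanPebble child S v 1 := fun C _ =>
  ReflTransGen.single
    ⟨Or.inl ⟨v, ∅, fun w hw => (hv w hw).elim, by simp, by simp⟩, card_insert_le v C⟩

theorem canPebble_two_children {S S₁ S₂ : Finset α} {v c₁ c₂ : α} {k : ℕ}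
    (hv : ∀ w, child w v ↔ w = c₁ ∨ w = c₂) (hc₁ : c₁ ∈ S₁) (hc₂ : c₂ ∈ S₂)
    (hS₁ : S₁ ⊆ S) (hS₂ : S₂ ⊆ S) (hS : Disjoint S₁ S₂)
    (h₁ : CanPebble child S₁ c₁ (k + 1)) (h₂ : CanPebble child S₂ c₂ (k + 1)) :
    CanPebble child S v (k + 2) := by
  intro C hC
  have hc₁C : c₁ ∉ C := fun h => disjoint_left.mp hC h (hS₁ hc₁)
  have hc₂C : c₂ ∉ C := fun h => disjoint_left.mp hC h (hS₂ hc₂)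
  have hc₁₂ : c₁ ≠ c₂ := fun h => disjoint_left.mp hS hc₁ (h ▸ hc₂)
  have hC₁ : Disjoint (insert c₁ C) S₂ :=
    disjoint_insert_left.mpr ⟨disjoint_left.mp hS hc₁, hC.mono_right hS₂⟩
  have hcard : #(insert c₁ C) = #C + 1 := card_insert_of_notMem hc₁C
  have run₁ : ReflTransGen (PebMoveWithin child (#C + (k + 2))) C (insert c₁ C) :=
    ReflTransGen.mono (fun D E hDE => ⟨hDE.1, by have := hDE.2; omega⟩) _ _ (h₁ C (hC.mono_right hS₁))
  have run₂ : ReflTransGen (PebMoveWithin child (#C + (k + 2)))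
      (insert c₁ C) (insert c₂ (insert c₁ C)) :=
    ReflTransGen.mono (fun D E hDE => ⟨hDE.1, by have := hDE.2; omega⟩) _ _ (h₂ _ hC₁)
  have last : PebMoveWithin child (#C + (k + 2)) (insert c₂ (insert c₁ C)) (insert v C) := by
    refine ⟨Or.inl ⟨v, {c₁, c₂}, fun w hw => ?_, fun w hw => (hv w).mpr (by simpa using hw), ?_⟩,
      ?_⟩
    · rcases (hv w).mp hw with rfl | rfl <;> simp
    · congr 1
      ext x
      simp only [mem_sdiff, mem_insert, mem_singleton]
      grind
    · have := card_insert_le v C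
      omega
  exact (run₁.trans run₂).tail last

theorem needsPebbles_one {S : Finset α} {v : α} (hv : v ∈ S) : NeedsPebbles child S v 1 :=
  fun _ T _ _ hT => ⟨T, le_rfl, card_pos.mpr ⟨v, mem_inter.mpr ⟨hT, hv⟩⟩⟩

theorem IsPebblingSeq.shift {f : ℕ → Finset α} {T s T' : ℕ} (hf : IsPebblingSeq child f T)
    (hs : s + T' ≤ T) : IsPebblingSeq child (fun t => f (s + t)) T' :=
  fun t ht => hf (s + t) (by omega)

theorem PebMove.mem_of_child {C D : Finset α} {v c : α} (h : PebMove child C D) (hC : v ∉ C)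
    (hD : v ∈ D) (hc : child c v) : c ∈ C := by
  rcases h with ⟨u, S, hu, -, rfl⟩ | ⟨u, rfl⟩
  · obtain rfl | hv := mem_insert.mp hD
    · exact hu c hc
    · exact absurd (mem_sdiff.mp hv).1 hC
  · exact absurd (mem_of_mem_erase hD) hC

theorem IsPebblingSeq.exists_children_mem {f : ℕ → Finset α} {T : ℕ} {v : α}
    (hf : IsPebblingSeq child f T) (h0 : v ∉ f 0) (hT : v ∈ f T) :
    ∃ t < T, ∀ c, child c v → c ∈ f t := by
  obtain ⟨t, ht, hnot, hnext⟩ := Nat.exists_lt_not_and_succ (p := fun t => v ∈ f t) h0 hT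
  refine ⟨t, ht, fun c hc => ?_⟩
  rcases hf t ht with hmove | heq
  · exact hmove.mem_of_child child hnot hnext hc
  · exact absurd (heq ▸ hnext) hnot

theorem card_inter_add_card_inter_le {A S S₁ S₂ : Finset α} (hS₁ : S₁ ⊆ S) (hS₂ : S₂ ⊆ S)
    (hS : Disjoint S₁ S₂) : #(A ∩ S₁) + #(A ∩ S₂) ≤ #(A ∩ S) := by
  rw [← card_union_of_disjoint (hS.mono inter_subset_right inter_subset_right),
    ← inter_union_distrib_left]
  exact card_le_card (inter_subset_inter_left (union_subset hS₁ hS₂))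

theorem NeedsPebbles.exists_of_sibling_occupied {S S₁ S₂ : Finset α} {c₁ : α} {k : ℕ}
    (h₁ : NeedsPebbles child S₁ c₁ (k + 1)) (hS₁ : S₁ ⊆ S) (hS₂ : S₂ ⊆ S) (hS : Disjoint S₁ S₂)
    {f : ℕ → Finset α} {T s t₀ : ℕ} (hf : IsPebblingSeq child f T) (hst : s ≤ t₀)
    (ht₀ : t₀ ≤ T) (hs : Disjoint (f s) S₁) (hc₁ : c₁ ∈ f t₀)
    (hocc : ∀ t, s < t → t ≤ t₀ → ¬Disjoint (f t) S₂) :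
    ∃ τ ≤ T, k + 2 ≤ #(f τ ∩ S) := by
  obtain ⟨τ, hτ, hcard⟩ := h₁ (fun t => f (s + t)) (t₀ - s) (hf.shift child (by omega))
    (by simpa using hs) (by simpa [Nat.add_sub_cancel' hst] using hc₁)
  have hτ0 : τ ≠ 0 := by
    rintro rfl
    simp [disjoint_iff_inter_eq_empty.mp hs] at hcard
  have hocc' := card_pos.mpr (not_disjoint_iff_nonempty_inter.mp (hocc (s + τ) (by omega) (by omega)))
  have := card_inter_add_card_inter_le (A := f (s + τ)) hS₁ hS₂ hS
  exact ⟨s + τ, by omega, by omega⟩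

theorem needsPebbles_two_children {S S₁ S₂ : Finset α} {v c₁ c₂ : α} {k : ℕ} (hv : v ∈ S)
    (hc₁ : child c₁ v) (hc₂ : child c₂ v) (hS₁ : S₁ ⊆ S) (hS₂ : S₂ ⊆ S) (hS : Disjoint S₁ S₂)
    (h₁ : NeedsPebbles child S₁ c₁ (k + 1)) (h₂ : NeedsPebbles child S₂ c₂ (k + 1)) :
    NeedsPebbles child S v (k + 2) := by
  intro f T hf h0 hT
  obtain ⟨t₀, ht₀, hchildren⟩ := hf.exists_children_mem child (disjoint_right.mp h0 hv) hT
  obtain ⟨s₁, hs₁, hd₁, hocc₁⟩ :=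
    Nat.exists_le_last (p := fun t => Disjoint (f t) S₁) (h0.mono_right hS₁) t₀
  obtain ⟨s₂, hs₂, hd₂, hocc₂⟩ :=
    Nat.exists_le_last (p := fun t => Disjoint (f t) S₂) (h0.mono_right hS₂) t₀
  rcases le_total s₂ s₁ with h | h
  · exact h₁.exists_of_sibling_occupied child hS₁ hS₂ hS hf hs₁ ht₀.le hd₁ (hchildren c₁ hc₁)
      fun t ht ht' => hocc₂ t (by omega) ht'
  · exact h₂.exists_of_sibling_occupied child hS₂ hS₁ hS.symm hf hs₂ ht₀.le hd₂
      (hchildren c₂ hc₂) fun t ht ht' => hocc₁ t (by omega) ht'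

end Pebbling

/- In 1-based labels `v + 1` the parent of `n` is `n / 2`, so the descendants of `v` are the
nodes whose label is shifted down to `v + 1` by some power of two. -/
open Classical in
noncomputable def heapSubtree (N v : ℕ) : Finset (Fin N) :=
  univ.filter fun w => ∃ j, ((w : ℕ) + 1) / 2 ^ j = v + 1

theorem mem_heapSubtree {N v : ℕ} {w : Fin N} :
    w ∈ heapSubtree N v ↔ ∃ j, ((w : ℕ) + 1) / 2 ^ j = v + 1 := by
  simp [heapSubtree]

theorem self_mem_heapSubtree {N : ℕ} (v : Fin N) : v ∈ heapSubtree N v :=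
  mem_heapSubtree.mpr ⟨0, by simp⟩

theorem heapSubtree_subset {N c v : ℕ} (hc : (c + 1) / 2 = v + 1) :
    heapSubtree N c ⊆ heapSubtree N v := fun w hw => by
  obtain ⟨j, hj⟩ := mem_heapSubtree.mp hw
  exact mem_heapSubtree.mpr ⟨j + 1, by rw [pow_succ, ← Nat.div_div_eq_div_mul, hj, hc]⟩

theorem disjoint_heapSubtree_children (N v : ℕ) :
    Disjoint (heapSubtree N (2 * v + 1)) (heapSubtree N (2 * v + 2)) := by
  refine disjoint_left.mpr fun w h₁ h₂ => ?_
  obtain ⟨i, hi⟩ := mem_heapSubtree.mp h₁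
  obtain ⟨j, hj⟩ := mem_heapSubtree.mp h₂
  exact Nat.div_two_pow_ne_succ (m := v + 1) (by omega) (by rw [hi]; ring) (by rw [hj]; ring)

theorem heap_induction {h N : ℕ} (hN : N = 2 ^ h - 1) {P : Fin N → ℕ → Prop}
    (leaf : ∀ v : Fin N, N ≤ 2 * v + 1 → P v 1)
    (node : ∀ k (v c₁ c₂ : Fin N), (c₁ : ℕ) = 2 * v + 1 → (c₂ : ℕ) = 2 * v + 2 →
      P c₁ (k + 1) → P c₂ (k + 1) → P v (k + 2))
    {root : Fin N} (hroot : (root : ℕ) = 0) : P root h := by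
  suffices ∀ k d (v : Fin N), d + k = h → 2 ^ d ≤ (v : ℕ) + 1 → (v : ℕ) + 1 < 2 ^ (d + 1) →
      P v k from this h 0 root (zero_add h) (by simp) (by simp [hroot])
  intro k
  induction k using Nat.twoStepInduction with
  | zero =>
    intro d v hd hlo _
    subst hd hN
    have := v.isLt
    simp only [add_zero] at this
    omega
  | one =>
    intro d v hd hlo _
    refine leaf v ?_
    have := pow_succ 2 d
    rw [← hd] at hN
    omega
  | more k _ ih =>
    intro d v hd hlo hhi
    have hpow : 2 ^ (d + 2) ≤ 2 ^ h := Nat.pow_le_pow_right two_pos (by omega)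
    have : 2 ^ (d + 2) = 2 ^ (d + 1) * 2 := pow_succ 2 (d + 1)
    have := pow_succ 2 d
    exact node k v ⟨2 * v + 1, by omega⟩ ⟨2 * v + 2, by omega⟩ rfl rfl
      (ih (d + 1) _ (by omega) (by simp only; omega) (by simp only; omega))
      (ih (d + 1) _ (by omega) (by simp only; omega) (by simp only; omega))

theorem canPebble_heap {h N : ℕ} (hN : N = 2 ^ h - 1) {child : Fin N → Fin N → Prop}
    (hchild : ∀ v u : Fin N, child v u ↔ ((v : ℕ) = 2 * u + 1 ∨ (v : ℕ) = 2 * u + 2))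
    {root : Fin N} (hroot : (root : ℕ) = 0) :
    CanPebble child (heapSubtree N root) root h :=
  heap_induction hN
    (fun v hv => canPebble_of_forall_not_child child fun w hw => by
      have := w.isLt
      rw [hchild] at hw
      omega)
    (fun k v c₁ c₂ h₁ h₂ ih₁ ih₂ => canPebble_two_children child
      (fun w => by simp [hchild, Fin.ext_iff, h₁, h₂])
      (self_mem_heapSubtree c₁) (self_mem_heapSubtree c₂)
      (heapSubtree_subset (by omega)) (heapSubtree_subset (by omega))
      (by rw [h₁, h₂]; exact disjoint_heapSubtree_children N v) ih₁ ih₂)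
    hroot

theorem needsPebbles_heap {h N : ℕ} (hN : N = 2 ^ h - 1) {child : Fin N → Fin N → Prop}
    (hchild : ∀ v u : Fin N, child v u ↔ ((v : ℕ) = 2 * u + 1 ∨ (v : ℕ) = 2 * u + 2))
    {root : Fin N} (hroot : (root : ℕ) = 0) :
    NeedsPebbles child (heapSubtree N root) root h :=
  heap_induction hN (fun v _ => needsPebbles_one child (self_mem_heapSubtree v))
    (fun k v c₁ c₂ h₁ h₂ ih₁ ih₂ => needsPebbles_two_children child
      (self_mem_heapSubtree v) ((hchild c₁ v).mpr (Or.inl h₁)) ((hchild c₂ v).mpr (Or.inr h₂))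
      (heapSubtree_subset (by omega)) (heapSubtree_subset (by omega))
      (by rw [h₁, h₂]; exact disjoint_heapSubtree_children N v) ih₁ ih₂)
    hroot

theorem stmt8_general (h : ℕ) (N : ℕ) (hN : N = 2 ^ h - 1)
    (child : Fin N → Fin N → Prop)
    (hchild : ∀ v u : Fin N, child v u ↔ ((v : ℕ) = 2 * u + 1 ∨ (v : ℕ) = 2 * u + 2))
    (root : Fin N) (hroot : (root : ℕ) = 0) :
    pebCost (Fin N) child root = h := by
  refine pebCost_eq child ?_ fun f T hf => ?_
  · simpa using canPebble_heap hN hchild hroot ∅ (disjoint_empty_left _)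
  · obtain ⟨τ, hτ, hcard⟩ := needsPebbles_heap hN hchild hroot f T hf.2.2
      (by rw [hf.1]; exact disjoint_empty_left _) hf.2.1
    exact ⟨τ, hτ, hcard.trans (card_le_card inter_subset_left)⟩

/-- The complete binary tree of height `h ≥ 1`, with `2^h - 1` nodes in heap order
(node `u` has children `2u+1` and `2u+2`, the root is node `0`, arcs go from children to
parents), has black pebbling cost exactly `h`. -/
theorem stmt8 (h : ℕ) (hh : 1 ≤ h) (N : ℕ) (hN : N = 2 ^ h - 1)
    (child : Fin N → Fin N → Prop)
    (hchild : ∀ v u : Fin N, child v u ↔ ((v : ℕ) = 2 * u + 1 ∨ (v : ℕ) = 2 * u + 2))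
    (root : Fin N) (hroot : (root : ℕ) = 0) :
    pebCost (Fin N) child root = h :=
  stmt8_general h N hN child hchild root hroot
end
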